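/- arXiv:1902.02329 — 6 statements merged into one kernel-verified Lean document; each statement's English description precedes it below -/
import Mathlib

section
/- Let p ∈ (0,1] ∪ [2,∞). For any measure space (X, 𝒜, μ) and any measurable f, g : X → [0,∞) with ∫ f^p dμ < ∞, ∫ g^p dμ < ∞ and ∫ f^p dμ + ∫ g^p dμ > 0, setting Γ := 2·∫ (fg)^{p/2} dμ / (∫ f^p dμ + ∫ g^p dμ), one has ∫ (f+g)^p dμ ≤ ( ((1+√(1−Γ²))/2)^{1/p} + ((1−√(1−Γ²))/2)^{1/p} )^p · (∫ f^p dμ + ∫ g^p dμ). -/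
/-!
Writing `x = r e^θ`, `y = r e^(-θ)` turns `(x + y)^p`, `x^p + y^p` and `(x y)^(p/2)` into
`r^p (2 cosh θ)^p`, `2 r^p cosh (p θ)` and `r^p`. For `p ∈ (0,1] ∪ [2,∞)` the curve
`cosh (p θ) ↦ (2 cosh θ)^p` is concave (its slope `tangentSlope p θ` decreases in `θ > 0`), so it
lies below its tangent lines. This gives pointwise bounds
`(x + y)^p ≤ a (x^p + y^p) + b (x y)^(p/2)` indexed by the point of tangency `θ₀`; integrated,
they give `‖f + g‖_p^p ≤ (a + b Γ / 2) (‖f‖_p^p + ‖g‖_p^p)`, and `cosh (p θ₀) = 1 / Γ` makes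
`a + b Γ / 2` the constant of the theorem. The case `Γ = 1` is the limit `θ₀ → 0`, and `Γ = 0`
forces `f g = 0` almost everywhere.
-/

open MeasureTheory Real Set
open scoped ENNReal

theorem pos_of_mem_Ioc_union_Ici_two {p : ℝ} (hp : p ∈ Ioc 0 1 ∪ Ici 2) : 0 < p :=
  hp.elim (·.1) fun h => two_pos.trans_le h

theorem mul_sinh_mul_le_mul_sinh_mul {a b t : ℝ} (hb : 0 < b) (hab : b ≤ a) (ht : 0 ≤ t) :
    a * sinh (b * t) ≤ b * sinh (a * t) := by
  have ha : 0 < a := hb.trans_le hab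
  have hderiv (c x : ℝ) : HasDerivAt (fun t => sinh (c * t)) (cosh (c * x) * c) x :=
    ((hasDerivAt_id x).const_mul c).sinh.congr_deriv (by simp)
  have hmono : MonotoneOn (fun t => b * sinh (a * t) - a * sinh (b * t)) (Ici 0) := by
    refine monotoneOn_of_hasDerivWithinAt_nonneg (convex_Ici 0) (by fun_prop)
      (fun x _ => (((hderiv a x).const_mul b).sub ((hderiv b x).const_mul a)).hasDerivWithinAt)
      fun x hx => ?_
    rw [interior_Ici, mem_Ioi] at hx
    have : cosh (b * x) ≤ cosh (a * x) := by
      rw [cosh_le_cosh, abs_of_nonneg (by positivity), abs_of_nonneg (by positivity)]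
      exact mul_le_mul_of_nonneg_right hab hx.le
    nlinarith [mul_pos hb ha]
  simpa using hmono self_mem_Ici ht ht

theorem one_add_mul_sinh_sq_mul_sinh_le {p θ : ℝ} (hp : p ∈ Ioc 0 1 ∪ Ici 2) (hθ : 0 ≤ θ) :
    (1 + p * sinh θ ^ 2) * sinh (p * θ) ≤ p * sinh θ * cosh θ * cosh (p * θ) := by
  have hdiff : p * sinh θ * cosh θ * cosh (p * θ) - (1 + p * sinh θ ^ 2) * sinh (p * θ)
      = (p / 2 - 1) * sinh (p * θ) - p / 2 * sinh ((p - 2) * θ) := by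
    rw [show (p - 2) * θ = p * θ - 2 * θ by ring, sinh_sub, cosh_two_mul, sinh_two_mul,
      cosh_sq']
    ring
  rcases hp with ⟨hp0, hp1⟩ | hp2
  · have := mul_sinh_mul_le_mul_sinh_mul hp0 (by linarith : p ≤ 2 - p) hθ
    rw [show (p - 2) * θ = -((2 - p) * θ) by ring, sinh_neg] at hdiff
    nlinarith
  · rcases (mem_Ici.1 hp2).eq_or_lt with rfl | hp2
    · norm_num at hdiff
      linarith
    · have := mul_sinh_mul_le_mul_sinh_mul (by linarith : 0 < p - 2) (by linarith : p - 2 ≤ p) hθ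
      nlinarith

noncomputable def tangentSlope (p θ : ℝ) : ℝ := (2 * cosh θ) ^ (p - 1) * (2 * sinh θ) / sinh (p * θ)

theorem hasDerivAt_two_cosh_rpow (p θ : ℝ) :
    HasDerivAt (fun θ => (2 * cosh θ) ^ p) (2 * sinh θ * p * (2 * cosh θ) ^ (p - 1)) θ :=
  ((hasDerivAt_cosh θ).const_mul 2).rpow_const (Or.inl (by positivity))

theorem antitoneOn_tangentSlope {p : ℝ} (hp : p ∈ Ioc 0 1 ∪ Ici 2) :
    AntitoneOn (tangentSlope p) (Ioi 0) := by
  have hp0 : 0 < p := pos_of_mem_Ioc_union_Ici_two hp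
  have hderiv : ∀ θ ∈ Ioi (0 : ℝ), HasDerivAt (tangentSlope p)
      ((((2 * sinh θ * (p - 1) * (2 * cosh θ) ^ (p - 1 - 1)) * (2 * sinh θ)
          + (2 * cosh θ) ^ (p - 1) * (2 * cosh θ)) * sinh (p * θ)
        - (2 * cosh θ) ^ (p - 1) * (2 * sinh θ) * (cosh (p * θ) * p)) / sinh (p * θ) ^ 2) θ := by
    intro θ hθ
    have hD : HasDerivAt (fun θ => sinh (p * θ)) (cosh (p * θ) * p) θ :=
      ((hasDerivAt_id θ).const_mul p).sinh.congr_deriv (by simp)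
    exact ((hasDerivAt_two_cosh_rpow (p - 1) θ).mul ((hasDerivAt_sinh θ).const_mul 2)).div hD
      (sinh_pos_iff.2 (mul_pos hp0 hθ)).ne'
  refine antitoneOn_of_hasDerivWithinAt_nonpos (convex_Ioi 0)
    (fun θ hθ => (hderiv θ hθ).continuousAt.continuousWithinAt)
    (fun θ hθ => (hderiv θ (interior_subset hθ)).hasDerivWithinAt) fun θ hθ => ?_
  rw [interior_Ioi, mem_Ioi] at hθ
  have hc : 0 < 2 * cosh θ := by positivity
  have hsplit : (2 * cosh θ) ^ (p - 1) = (2 * cosh θ) ^ (p - 1 - 1) * (2 * cosh θ) := by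
    rw [rpow_sub_one hc.ne' (p - 1), div_mul_cancel₀ _ hc.ne']
  have hnum : ((2 * sinh θ * (p - 1) * (2 * cosh θ) ^ (p - 1 - 1)) * (2 * sinh θ)
          + (2 * cosh θ) ^ (p - 1) * (2 * cosh θ)) * sinh (p * θ)
        - (2 * cosh θ) ^ (p - 1) * (2 * sinh θ) * (cosh (p * θ) * p)
      = 4 * (2 * cosh θ) ^ (p - 1 - 1) * ((1 + p * sinh θ ^ 2) * sinh (p * θ)
          - p * sinh θ * cosh θ * cosh (p * θ)) := by
    rw [hsplit]
    linear_combination (4 * (2 * cosh θ) ^ (p - 1 - 1) * sinh (p * θ)) * cosh_sq' θ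
  rw [hnum]
  have hkey := one_add_mul_sinh_sq_mul_sinh_le hp hθ.le
  have hpow : 0 < (2 * cosh θ) ^ (p - 1 - 1) := rpow_pos_of_pos hc _
  apply div_nonpos_of_nonpos_of_nonneg _ (sq_nonneg _)
  nlinarith

theorem tangentSlope_nonneg {p θ : ℝ} (hp : 0 < p) (hθ : 0 < θ) : 0 ≤ tangentSlope p θ :=
  div_nonneg (mul_nonneg (rpow_nonneg (by positivity) _) (by linarith [sinh_pos_iff.2 hθ]))
    (sinh_pos_iff.2 (mul_pos hp hθ)).le

noncomputable def tangentIntercept (p θ : ℝ) : ℝ :=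
  (2 * cosh θ) ^ p - tangentSlope p θ * cosh (p * θ)

theorem hasDerivAt_mul_cosh_mul_sub_two_cosh_rpow (p m θ : ℝ) :
    HasDerivAt (fun θ => m * cosh (p * θ) - (2 * cosh θ) ^ p)
      (p * sinh (p * θ) * (m - tangentSlope p θ)) θ := by
  refine ((((hasDerivAt_id θ).const_mul p).cosh.const_mul m).sub
    (hasDerivAt_two_cosh_rpow p θ)).congr_deriv ?_
  by_cases h : sinh (p * θ) = 0
  · rcases mul_eq_zero.1 (sinh_eq_zero.1 h) with rfl | rfl <;> simp
  · simp only [tangentSlope, id]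
    field_simp

theorem two_cosh_rpow_le_tangent {p θ₀ : ℝ} (hp : p ∈ Ioc 0 1 ∪ Ici 2) (hθ₀ : 0 < θ₀) (θ : ℝ) :
    (2 * cosh θ) ^ p ≤ tangentSlope p θ₀ * cosh (p * θ) + tangentIntercept p θ₀ := by
  have hp0 : 0 < p := pos_of_mem_Ioc_union_Ici_two hp
  set m := tangentSlope p θ₀
  set G : ℝ → ℝ := fun θ => m * cosh (p * θ) - (2 * cosh θ) ^ p
  have hG := hasDerivAt_mul_cosh_mul_sub_two_cosh_rpow p m
  have hcont : ContinuousOn G univ := fun θ _ => (hG θ).continuousAt.continuousWithinAt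
  have hmono : MonotoneOn G (Ici θ₀) := by
    refine monotoneOn_of_hasDerivWithinAt_nonneg (convex_Ici θ₀) (hcont.mono (subset_univ _))
      (fun θ _ => (hG θ).hasDerivWithinAt) fun θ hθ => ?_
    rw [interior_Ici, mem_Ioi] at hθ
    have hθ0 : 0 < θ := hθ₀.trans hθ
    have hslope : 0 ≤ m - tangentSlope p θ :=
      sub_nonneg.2 (antitoneOn_tangentSlope hp (mem_Ioi.2 hθ₀) (mem_Ioi.2 hθ0) hθ.le)
    have hsinh := sinh_pos_iff.2 (mul_pos hp0 hθ0)
    positivity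
  have hanti : AntitoneOn G (Icc 0 θ₀) := by
    refine antitoneOn_of_hasDerivWithinAt_nonpos (convex_Icc 0 θ₀) (hcont.mono (subset_univ _))
      (fun θ _ => (hG θ).hasDerivWithinAt) fun θ hθ => ?_
    rw [interior_Icc] at hθ
    have hslope : m - tangentSlope p θ ≤ 0 :=
      sub_nonpos.2 (antitoneOn_tangentSlope hp (mem_Ioi.2 hθ.1) (mem_Ioi.2 hθ₀) hθ.2.le)
    have hsinh := sinh_pos_iff.2 (mul_pos hp0 hθ.1)
    exact mul_nonpos_of_nonneg_of_nonpos (by positivity) hslope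
  have hmin : G θ₀ ≤ G |θ| := by
    rcases le_total θ₀ |θ| with h | h
    · exact hmono self_mem_Ici h h
    · exact hanti ⟨abs_nonneg θ, h⟩ ⟨hθ₀.le, le_rfl⟩ h
  have habs : G |θ| = G θ := by
    simp only [G]
    rw [cosh_abs, show p * |θ| = |p * θ| by rw [abs_mul, abs_of_pos hp0], cosh_abs]
  simp only [tangentIntercept, G, habs] at hmin ⊢
  linarith

theorem add_rpow_le_tangent_of_pos {p θ₀ x y : ℝ} (hp : p ∈ Ioc 0 1 ∪ Ici 2) (hθ₀ : 0 < θ₀)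
    (hx : 0 < x) (hy : 0 < y) :
    (x + y) ^ p ≤ tangentSlope p θ₀ / 2 * (x ^ p + y ^ p)
      + tangentIntercept p θ₀ * (x * y) ^ (p / 2) := by
  set s := (log x + log y) / 2
  set θ := (log x - log y) / 2
  have hxe : x = exp s * exp θ := by
    rw [← exp_add, show s + θ = log x by ring, exp_log hx]
  have hye : y = exp s * exp (-θ) := by
    rw [← exp_add, show s + -θ = log y by ring, exp_log hy]
  have hsum : (x + y) ^ p = exp (s * p) * (2 * cosh θ) ^ p := by
    rw [hxe, hye, cosh_eq, ← mul_add, mul_rpow (exp_pos s).le (by positivity), ← exp_mul]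
    ring_nf
  have hpow : x ^ p + y ^ p = exp (s * p) * (2 * cosh (p * θ)) := by
    rw [hxe, hye, mul_rpow (exp_pos s).le (exp_pos θ).le,
      mul_rpow (exp_pos s).le (exp_pos _).le, ← exp_mul, ← exp_mul, ← exp_mul, cosh_eq]
    ring_nf
  have hprod : (x * y) ^ (p / 2) = exp (s * p) := by
    rw [hxe, hye, ← exp_add, ← exp_add, ← exp_add, ← exp_mul]
    ring_nf
  rw [hsum, hpow, hprod]
  have hscaled := mul_le_mul_of_nonneg_left (two_cosh_rpow_le_tangent hp hθ₀ θ) (exp_pos (s * p)).le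
  linarith

theorem add_rpow_le_tangent {p θ₀ x y : ℝ} (hp : p ∈ Ioc 0 1 ∪ Ici 2) (hθ₀ : 0 < θ₀)
    (hx : 0 ≤ x) (hy : 0 ≤ y) :
    (x + y) ^ p ≤ tangentSlope p θ₀ / 2 * (x ^ p + y ^ p)
      + tangentIntercept p θ₀ * (x * y) ^ (p / 2) := by
  have hp0 : 0 < p := pos_of_mem_Ioc_union_Ici_two hp
  have hclosed : IsClosed {z : ℝ × ℝ | (z.1 + z.2) ^ p ≤ tangentSlope p θ₀ / 2 * (z.1 ^ p + z.2 ^ p)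
      + tangentIntercept p θ₀ * (z.1 * z.2) ^ (p / 2)} :=
    isClosed_le (by fun_prop (disch := positivity)) (by fun_prop (disch := positivity))
  have hsub := closure_minimal (s := Ioi 0 ×ˢ Ioi 0)
    (fun z hz => add_rpow_le_tangent_of_pos hp hθ₀ hz.1 hz.2) hclosed
  rw [closure_prod_eq, closure_Ioi] at hsub
  exact hsub (mk_mem_prod hx hy)

noncomputable def upperBoundConst (p Γ : ℝ) : ℝ :=
  (((1 + √(1 - Γ ^ 2)) / 2) ^ (1 / p) + ((1 - √(1 - Γ ^ 2)) / 2) ^ (1 / p)) ^ p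

theorem upperBoundConst_zero {p : ℝ} (hp : p ≠ 0) : upperBoundConst p 0 = 1 := by
  simp [upperBoundConst, hp]

theorem upperBoundConst_one {p : ℝ} (hp : p ≠ 0) : upperBoundConst p 1 = 2 ^ p / 2 := by
  rw [upperBoundConst]
  norm_num
  rw [← two_mul, mul_rpow zero_le_two (by positivity), ← rpow_mul (by norm_num),
    inv_mul_cancel₀ hp, rpow_one]
  ring

theorem upperBoundConst_inv_cosh {p θ : ℝ} (hp : 0 < p) (hθ : 0 ≤ θ) :
    upperBoundConst p (cosh (p * θ))⁻¹ = (cosh (p * θ))⁻¹ / 2 * (2 * cosh θ) ^ p := by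
  set c := cosh (p * θ)
  have hc : 0 < c := cosh_pos _
  have hsqrt : √(1 - c⁻¹ ^ 2) = sinh (p * θ) / c := by
    rw [show 1 - c⁻¹ ^ 2 = (sinh (p * θ) / c) ^ 2 by field_simp; linarith [cosh_sq' (p * θ)]]
    exact sqrt_sq (div_nonneg (sinh_nonneg_iff.2 (by positivity)) hc.le)
  have hplus : (1 + √(1 - c⁻¹ ^ 2)) / 2 = c⁻¹ / 2 * exp (p * θ) := by
    rw [hsqrt, ← cosh_add_sinh]; field_simp; rfl
  have hminus : (1 - √(1 - c⁻¹ ^ 2)) / 2 = c⁻¹ / 2 * exp (-(p * θ)) := by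
    rw [hsqrt, ← cosh_sub_sinh]; field_simp; rfl
  have hroot (t : ℝ) : exp (p * t) ^ (1 / p) = exp t := by
    rw [← exp_mul]; field_simp
  rw [upperBoundConst, hplus, hminus, mul_rpow (by positivity) (exp_pos _).le,
    mul_rpow (by positivity) (exp_pos _).le, hroot, ← mul_neg, hroot, ← mul_add,
    show exp θ + exp (-θ) = 2 * cosh θ by rw [cosh_eq]; ring,
    mul_rpow (by positivity) (by positivity), ← rpow_mul (by positivity), one_div_mul_cancel hp.ne',
    rpow_one]

theorem le_upperBoundConst_mul_of_lt_one {p Γ S L : ℝ} (hp : 0 < p) (hΓ0 : 0 < Γ) (hΓ1 : Γ < 1)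
    (h : ∀ θ > 0, L ≤ tangentSlope p θ / 2 * S + tangentIntercept p θ * (Γ / 2 * S)) :
    L ≤ upperBoundConst p Γ * S := by
  have hΓinv : 1 < Γ⁻¹ := one_lt_inv_iff₀.2 ⟨hΓ0, hΓ1⟩
  set θ := arcosh Γ⁻¹ / p
  have hθ : 0 < θ := div_pos (arcosh_pos hΓinv) hp
  have hcosh : cosh (p * θ) = Γ⁻¹ := by
    rw [mul_div_cancel₀ _ hp.ne', cosh_arcosh hΓinv.le]
  have hconst := upperBoundConst_inv_cosh hp hθ.le
  rw [hcosh, inv_inv] at hconst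
  rw [hconst]
  have hθbound := h θ hθ
  rw [tangentIntercept, hcosh] at hθbound
  field_simp at hθbound ⊢
  linarith

theorem le_upperBoundConst_one_mul {p S L : ℝ} (hp : 0 < p) (hS : 0 ≤ S)
    (h : ∀ θ > 0, L ≤ tangentSlope p θ / 2 * S + tangentIntercept p θ * (1 / 2 * S)) :
    L ≤ upperBoundConst p 1 * S := by
  rw [upperBoundConst_one hp.ne']
  have hbound : ∀ θ > 0, L ≤ (2 * cosh θ) ^ p / 2 * S := by
    intro θ hθ
    have hθbound := h θ hθ
    have hgap := mul_nonneg
      (mul_nonneg (tangentSlope_nonneg hp hθ) (sub_nonneg.2 (one_le_cosh (p * θ)))) hS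
    rw [tangentIntercept] at hθbound
    linarith
  have hlim : Filter.Tendsto (fun θ => (2 * cosh θ) ^ p / 2 * S) (nhdsWithin 0 (Ioi 0))
      (nhds (2 ^ p / 2 * S)) := by
    have hcont : Continuous (fun θ => (2 * cosh θ) ^ p / 2 * S) := by
      fun_prop (disch := positivity)
    simpa using (hcont.tendsto 0).mono_left nhdsWithin_le_nhds
  exact ge_of_tendsto hlim (eventually_nhdsWithin_of_forall hbound)

theorem ENNReal.two_mul_le_add_sq (a b : ℝ≥0∞) : 2 * a * b ≤ a ^ 2 + b ^ 2 := by
  rcases eq_or_ne a ∞ with rfl | ha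
  · simp
  rcases eq_or_ne b ∞ with rfl | hb
  · simp
  lift a to NNReal using ha
  lift b to NNReal using hb
  exact_mod_cast _root_.two_mul_le_add_sq a b

theorem ENNReal.two_mul_mul_rpow_half_le {p : ℝ} (hp : 0 ≤ p) (x y : ℝ≥0∞) :
    2 * (x * y) ^ (p / 2) ≤ x ^ p + y ^ p := by
  have hsq (z : ℝ≥0∞) : z ^ p = (z ^ (p / 2)) ^ 2 := by
    rw [← ENNReal.rpow_natCast, ← ENNReal.rpow_mul]
    norm_num
  rw [ENNReal.mul_rpow_of_nonneg _ _ (by positivity), hsq x, hsq y, ← mul_assoc]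
  exact ENNReal.two_mul_le_add_sq _ _

theorem ENNReal.le_ofReal_mul_of_toReal_le {a b : ℝ≥0∞} {c : ℝ} (ha : a ≠ ∞) (hb : b ≠ ∞)
    (h : a.toReal ≤ c * b.toReal) : a ≤ ENNReal.ofReal c * b := by
  rw [← ENNReal.ofReal_toReal ha, ← ENNReal.ofReal_toReal hb,
    ← ENNReal.ofReal_mul' ENNReal.toReal_nonneg]
  exact ENNReal.ofReal_le_ofReal h

section Integrals

variable {X : Type*} [MeasurableSpace X] {μ : Measure X} {p : ℝ} {f g : X → ℝ≥0∞}

theorem two_mul_lintegral_mul_rpow_half_le (hp : 0 ≤ p) (hf : AEMeasurable f μ) :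
    2 * ∫⁻ x, (f x * g x) ^ (p / 2) ∂μ ≤ ∫⁻ x, f x ^ p ∂μ + ∫⁻ x, g x ^ p ∂μ := by
  rw [← lintegral_const_mul' 2 _ (by simp), ← lintegral_add_left' (hf.pow_const p)]
  exact lintegral_mono fun x => ENNReal.two_mul_mul_rpow_half_le hp (f x) (g x)

theorem lintegral_add_rpow_ne_top (hp : 0 ≤ p) (hf : AEMeasurable f μ)
    (hfp : ∫⁻ x, f x ^ p ∂μ ≠ ∞) (hgp : ∫⁻ x, g x ^ p ∂μ ≠ ∞) :
    ∫⁻ x, (f x + g x) ^ p ∂μ ≠ ∞ := by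
  refine ne_top_of_le_ne_top ?_
    (lintegral_mono fun x => ENNReal.add_rpow_le_two_rpow_mul_rpow_add_rpow (f x) (g x) hp)
  rw [lintegral_const_mul' _ _ (by simp), lintegral_add_left' (hf.pow_const p)]
  exact ENNReal.mul_ne_top (by simp) (ENNReal.add_ne_top.2 ⟨hfp, hgp⟩)

theorem lintegral_add_rpow_eq_of_lintegral_mul_rpow_eq_zero (hp : 0 < p)
    (hf : AEMeasurable f μ) (hg : AEMeasurable g μ) (h : ∫⁻ x, (f x * g x) ^ (p / 2) ∂μ = 0) :
    ∫⁻ x, (f x + g x) ^ p ∂μ = ∫⁻ x, f x ^ p ∂μ + ∫⁻ x, g x ^ p ∂μ := by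
  rw [← lintegral_add_left' (hf.pow_const p)]
  refine lintegral_congr_ae ?_
  filter_upwards [(lintegral_eq_zero_iff' ((hf.mul hg).pow_const _)).1 h] with x hx
  rcases mul_eq_zero.1 ((ENNReal.rpow_eq_zero_iff_of_pos (by positivity)).1 hx) with h0 | h0 <;>
    simp [h0, ENNReal.zero_rpow_of_pos hp]

theorem toReal_lintegral_le_of_ae_le {F G H : X → ℝ≥0∞} (hF : AEMeasurable F μ)
    (hG : AEMeasurable G μ) (hH : AEMeasurable H μ) (hFi : ∫⁻ x, F x ∂μ ≠ ∞)
    (hGi : ∫⁻ x, G x ∂μ ≠ ∞) (hHi : ∫⁻ x, H x ∂μ ≠ ∞) {a b : ℝ}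
    (h : ∀ᵐ x ∂μ, (F x).toReal ≤ a * (G x).toReal + b * (H x).toReal) :
    (∫⁻ x, F x ∂μ).toReal ≤ a * (∫⁻ x, G x ∂μ).toReal + b * (∫⁻ x, H x ∂μ).toReal := by
  have hGint := integrable_toReal_of_lintegral_ne_top hG hGi
  have hHint := integrable_toReal_of_lintegral_ne_top hH hHi
  rw [← integral_toReal hF (ae_lt_top' hF hFi), ← integral_toReal hG (ae_lt_top' hG hGi),
    ← integral_toReal hH (ae_lt_top' hH hHi), ← integral_const_mul, ← integral_const_mul,
    ← integral_add (hGint.const_mul a) (hHint.const_mul b)]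
  exact integral_mono_of_nonneg (ae_of_all _ fun _ => ENNReal.toReal_nonneg)
    ((hGint.const_mul a).add (hHint.const_mul b)) h

theorem toReal_lintegral_add_rpow_le (hp : 0 < p) (hf : AEMeasurable f μ) (hg : AEMeasurable g μ)
    (hfp : ∫⁻ x, f x ^ p ∂μ ≠ ∞) (hgp : ∫⁻ x, g x ^ p ∂μ ≠ ∞)
    (hfg : ∫⁻ x, (f x * g x) ^ (p / 2) ∂μ ≠ ∞) {a b : ℝ}
    (h : ∀ u v : ℝ, 0 ≤ u → 0 ≤ v → (u + v) ^ p ≤ a * (u ^ p + v ^ p) + b * (u * v) ^ (p / 2)) :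
    (∫⁻ x, (f x + g x) ^ p ∂μ).toReal ≤
      a * ((∫⁻ x, f x ^ p ∂μ).toReal + (∫⁻ x, g x ^ p ∂μ).toReal)
        + b * (∫⁻ x, (f x * g x) ^ (p / 2) ∂μ).toReal := by
  have hfin {k : X → ℝ≥0∞} (hk : AEMeasurable k μ) (hkp : ∫⁻ x, k x ^ p ∂μ ≠ ∞) :
      ∀ᵐ x ∂μ, k x ≠ ∞ :=
    (ae_lt_top' (hk.pow_const p) hkp).mono fun x hx => ((ENNReal.rpow_lt_top_iff_of_pos hp).1 hx).ne
  rw [← ENNReal.toReal_add hfp hgp, ← lintegral_add_left' (hf.pow_const p)]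
  refine toReal_lintegral_le_of_ae_le (F := fun x => (f x + g x) ^ p)
    (G := fun x => f x ^ p + g x ^ p) (H := fun x => (f x * g x) ^ (p / 2))
    ((hf.add hg).pow_const p)
    ((hf.pow_const p).add (hg.pow_const p)) ((hf.mul hg).pow_const _)
    (lintegral_add_rpow_ne_top hp.le hf hfp hgp)
    (by rw [lintegral_add_left' (hf.pow_const p)]; exact ENNReal.add_ne_top.2 ⟨hfp, hgp⟩) hfg ?_
  filter_upwards [hfin hf hfp, hfin hg hgp] with x hfx hgx
  rw [ENNReal.toReal_add (ENNReal.rpow_ne_top_of_nonneg hp.le hfx)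
    (ENNReal.rpow_ne_top_of_nonneg hp.le hgx)]
  simp only [← ENNReal.toReal_rpow, ENNReal.toReal_add hfx hgx, ENNReal.toReal_mul]
  exact h _ _ ENNReal.toReal_nonneg ENNReal.toReal_nonneg

end Integrals

theorem statement0_general
    {X : Type*} [MeasurableSpace X] (μ : Measure X) (p : ℝ)
    (hp : p ∈ Set.Ioc (0 : ℝ) 1 ∪ Set.Ici (2 : ℝ))
    (f g : X → ℝ≥0∞) (hf : Measurable f) (hg : Measurable g)
    (hfp : ∫⁻ x, f x ^ p ∂μ ≠ ∞) (hgp : ∫⁻ x, g x ^ p ∂μ ≠ ∞)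
    (Γ : ℝ)
    (hΓ : Γ = 2 * (∫⁻ x, (f x * g x) ^ (p / 2) ∂μ).toReal /
        ((∫⁻ x, f x ^ p ∂μ).toReal + (∫⁻ x, g x ^ p ∂μ).toReal)) :
    ∫⁻ x, (f x + g x) ^ p ∂μ ≤
      ENNReal.ofReal
          ((((1 + Real.sqrt (1 - Γ ^ 2)) / 2) ^ (1 / p) +
            ((1 - Real.sqrt (1 - Γ ^ 2)) / 2) ^ (1 / p)) ^ p) *
        (∫⁻ x, f x ^ p ∂μ + ∫⁻ x, g x ^ p ∂μ) := by
  change _ ≤ ENNReal.ofReal (upperBoundConst p Γ) * _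
  have hp0 : 0 < p := pos_of_mem_Ioc_union_Ici_two hp
  have hAM := two_mul_lintegral_mul_rpow_half_le hp0.le hf.aemeasurable (g := g) (μ := μ)
  have hAB := ENNReal.add_ne_top.2 ⟨hfp, hgp⟩
  have hfg := ne_top_of_le_ne_top hAB ((le_mul_of_one_le_left' one_le_two).trans hAM)
  rcases eq_or_ne (∫⁻ x, (f x * g x) ^ (p / 2) ∂μ) 0 with hfg0 | hfg0
  · rw [show Γ = 0 by simp [hΓ, hfg0], upperBoundConst_zero hp0.ne', ENNReal.ofReal_one, one_mul,
      lintegral_add_rpow_eq_of_lintegral_mul_rpow_eq_zero hp0 hf.aemeasurable hg.aemeasurable hfg0]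
  have hAM' := ENNReal.toReal_mono hAB hAM
  rw [ENNReal.toReal_mul, ENNReal.toReal_ofNat, ENNReal.toReal_add hfp hgp] at hAM'
  have hfgpos := ENNReal.toReal_pos hfg0 hfg
  have hS : 0 < (∫⁻ x, f x ^ p ∂μ).toReal + (∫⁻ x, g x ^ p ∂μ).toReal := by linarith
  have hΓ0 : 0 < Γ := hΓ ▸ div_pos (by linarith) hS
  have hΓ1 : Γ ≤ 1 := hΓ ▸ (div_le_one hS).2 hAM'
  have hfgΓ : (∫⁻ x, (f x * g x) ^ (p / 2) ∂μ).toReal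
      = Γ / 2 * ((∫⁻ x, f x ^ p ∂μ).toReal + (∫⁻ x, g x ^ p ∂μ).toReal) := by
    rw [hΓ]; field_simp
  have htangent (θ : ℝ) (hθ : 0 < θ) := hfgΓ ▸ toReal_lintegral_add_rpow_le hp0 hf.aemeasurable
    hg.aemeasurable hfp hgp hfg fun u v hu hv => add_rpow_le_tangent hp hθ hu hv
  refine ENNReal.le_ofReal_mul_of_toReal_le
    (lintegral_add_rpow_ne_top hp0.le hf.aemeasurable hfp hgp) hAB ?_
  rw [ENNReal.toReal_add hfp hgp]
  rcases hΓ1.eq_or_lt with rfl | hΓ1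
  · exact le_upperBoundConst_one_mul hp0 hS.le htangent
  · exact le_upperBoundConst_mul_of_lt_one hp0 hΓ0 hΓ1 htangent

/-- Theorem 1 (upper bound), for `p ∈ (0,1] ∪ [2,∞)`:
`‖f+g‖_p^p ≤ (((1+√(1-Γ²))/2)^{1/p} + ((1-√(1-Γ²))/2)^{1/p})^p (‖f‖_p^p + ‖g‖_p^p)`. -/
theorem statement0
    {X : Type*} [MeasurableSpace X] (μ : Measure X) (p : ℝ)
    (hp : p ∈ Set.Ioc (0 : ℝ) 1 ∪ Set.Ici (2 : ℝ))
    (f g : X → ℝ≥0∞) (hf : Measurable f) (hg : Measurable g)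
    (hffin : ∀ x, f x ≠ ∞) (hgfin : ∀ x, g x ≠ ∞)
    (hfp : ∫⁻ x, f x ^ p ∂μ ≠ ∞) (hgp : ∫⁻ x, g x ^ p ∂μ ≠ ∞)
    (hpos : 0 < ∫⁻ x, f x ^ p ∂μ + ∫⁻ x, g x ^ p ∂μ)
    (Γ : ℝ)
    (hΓ : Γ = 2 * (∫⁻ x, (f x * g x) ^ (p / 2) ∂μ).toReal /
        ((∫⁻ x, f x ^ p ∂μ).toReal + (∫⁻ x, g x ^ p ∂μ).toReal)) :
    ∫⁻ x, (f x + g x) ^ p ∂μ ≤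
      ENNReal.ofReal
          ((((1 + Real.sqrt (1 - Γ ^ 2)) / 2) ^ (1 / p) +
            ((1 - Real.sqrt (1 - Γ ^ 2)) / 2) ^ (1 / p)) ^ p) *
        (∫⁻ x, f x ^ p ∂μ + ∫⁻ x, g x ^ p ∂μ) :=
  statement0_general μ p hp f g hf hg hfp hgp Γ hΓ
end

section
/- Let p ∈ (0,∞), p ≠ 0, let (X, 𝒜, μ) be a measure space and let f, g : X → [0,∞) be measurable with ∫ f^p dμ < ∞, ∫ g^p dμ < ∞ and ∫ f^p dμ + ∫ g^p dμ > 0. If there is a constant k ∈ [0, 1/2] such that (fg)^{p/2} = k·(f^p + g^p) holds μ-almost everywhere, then equality holds: ∫ (f+g)^p dμ = ( ((1+√(1−Γ²))/2)^{1/p} + ((1−√(1−Γ²))/2)^{1/p} )^p · (∫ f^p dμ + ∫ g^p dμ), where Γ := 2·∫ (fg)^{p/2} dμ / (∫ f^p dμ + ∫ g^p dμ). -/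
open MeasureTheory Real Set
open scoped ENNReal

lemma key_real (p k u v : ℝ) (hp : 0 < p) (hk0 : 0 ≤ k) (hk2 : k ≤ 1 / 2)
    (hu : 0 ≤ u) (hv : 0 ≤ v)
    (h : (u * v) ^ (p / 2) = k * (u ^ p + v ^ p)) :
    (u + v) ^ p =
      ((((1 + Real.sqrt (1 - (2 * k) ^ 2)) / 2) ^ (1 / p) +
        ((1 - Real.sqrt (1 - (2 * k) ^ 2)) / 2) ^ (1 / p)) ^ p) * (u ^ p + v ^ p) := by
  have hd2 : (0:ℝ) ≤ 1 - (2 * k) ^ 2 := by nlinarith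
  set d := Real.sqrt (1 - (2 * k) ^ 2) with hd
  have hd0 : 0 ≤ d := Real.sqrt_nonneg _
  have hdsq : d ^ 2 = 1 - (2 * k) ^ 2 := Real.sq_sqrt hd2
  have hd1 : d ≤ 1 := by nlinarith
  set a := (1 + d) / 2 with ha
  set b := (1 - d) / 2 with hb
  have ha0 : 0 ≤ a := by simp only [ha]; linarith
  have hb0 : 0 ≤ b := by simp only [hb]; linarith
  have hab1 : a + b = 1 := by simp only [ha, hb]; ring
  have hab : a * b = k ^ 2 := by simp only [ha, hb]; nlinarith
  have hs0 : 0 ≤ u ^ p + v ^ p := by positivity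
  have hprod : u ^ p * v ^ p = k ^ 2 * (u ^ p + v ^ p) ^ 2 := by
    have h1 : (u * v) ^ p = ((u * v) ^ (p / 2)) ^ (2:ℕ) := by
      rw [← Real.rpow_natCast ((u * v) ^ (p / 2)) 2,
        ← Real.rpow_mul (mul_nonneg hu hv)]
      norm_num
    rw [Real.mul_rpow hu hv] at h1
    rw [h1, h]
    ring
  have hfac : (u ^ p - a * (u ^ p + v ^ p)) * (u ^ p - b * (u ^ p + v ^ p)) = 0 := by
    have : (u ^ p - a * (u ^ p + v ^ p)) * (u ^ p - b * (u ^ p + v ^ p)) =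
        u ^ p * u ^ p - (a + b) * (u ^ p + v ^ p) * u ^ p +
          (a * b) * (u ^ p + v ^ p) ^ 2 := by ring
    rw [this, hab1, hab]
    nlinarith [hprod]
  have main : ∀ c c' : ℝ, 0 ≤ c → 0 ≤ c' → u ^ p = c * (u ^ p + v ^ p) →
      v ^ p = c' * (u ^ p + v ^ p) →
      (u + v) ^ p = ((c ^ (1/p) + c' ^ (1/p)) ^ p) * (u ^ p + v ^ p) := by
    intro c c' hc hc' hcu hcv
    have hpne : p ≠ 0 := hp.ne'
    have huu : (c * (u ^ p + v ^ p)) ^ (1/p) = u := by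
      rw [← hcu, one_div, Real.rpow_rpow_inv hu hpne]
    have hvv : (c' * (u ^ p + v ^ p)) ^ (1/p) = v := by
      rw [← hcv, one_div, Real.rpow_rpow_inv hv hpne]
    have hsum : (c ^ (1/p) + c' ^ (1/p)) * ((u ^ p + v ^ p) ^ (1/p)) = u + v := by
      rw [add_mul, ← Real.mul_rpow hc hs0, ← Real.mul_rpow hc' hs0, huu, hvv]
    rw [← hsum, Real.mul_rpow (by positivity) (by positivity), one_div,
      Real.rpow_inv_rpow hs0 hpne]
  rcases mul_eq_zero.mp hfac with h1 | h1
  · have hu' : u ^ p = a * (u ^ p + v ^ p) := by linarith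
    have hv' : v ^ p = b * (u ^ p + v ^ p) := by
      linear_combination (-1:ℝ) * h1 - (u ^ p + v ^ p) * hab1
    exact main a b ha0 hb0 hu' hv'
  · have hu' : u ^ p = b * (u ^ p + v ^ p) := by linarith
    have hv' : v ^ p = a * (u ^ p + v ^ p) := by
      linear_combination (-1:ℝ) * h1 - (u ^ p + v ^ p) * hab1
    rw [main b a hb0 ha0 hu' hv', add_comm (b ^ (1/p)) (a ^ (1/p))]

/-- Equality case in Theorem 1 for `p > 0`: if `(fg)^{p/2} = k (f^p + g^p)` a.e. for some
constant `k ∈ [0, 1/2]`, then equality holds in (pir1). -/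
theorem statement3
    {X : Type*} [MeasurableSpace X] (μ : Measure X) (p : ℝ)
    (hp : 0 < p)
    (f g : X → ℝ≥0∞) (hf : Measurable f) (hg : Measurable g)
    (hffin : ∀ x, f x ≠ ∞) (hgfin : ∀ x, g x ≠ ∞)
    (hfp : ∫⁻ x, f x ^ p ∂μ ≠ ∞) (hgp : ∫⁻ x, g x ^ p ∂μ ≠ ∞)
    (hpos : 0 < ∫⁻ x, f x ^ p ∂μ + ∫⁻ x, g x ^ p ∂μ)
    (k : ℝ) (hk : k ∈ Set.Icc (0 : ℝ) (1 / 2))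
    (heq : ∀ᵐ x ∂μ, (f x * g x) ^ (p / 2) = ENNReal.ofReal k * (f x ^ p + g x ^ p))
    (Γ : ℝ)
    (hΓ : Γ = 2 * (∫⁻ x, (f x * g x) ^ (p / 2) ∂μ).toReal /
        ((∫⁻ x, f x ^ p ∂μ).toReal + (∫⁻ x, g x ^ p ∂μ).toReal)) :
    ∫⁻ x, (f x + g x) ^ p ∂μ =
      ENNReal.ofReal
          ((((1 + Real.sqrt (1 - Γ ^ 2)) / 2) ^ (1 / p) +
            ((1 - Real.sqrt (1 - Γ ^ 2)) / 2) ^ (1 / p)) ^ p) *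
        (∫⁻ x, f x ^ p ∂μ + ∫⁻ x, g x ^ p ∂μ) := by
  obtain ⟨hk0, hk2⟩ := hk
  have hmeas : Measurable fun x => f x ^ p + g x ^ p :=
    (hf.pow_const p).add (hg.pow_const p)
  -- Γ = 2k
  have hI : ∫⁻ x, (f x * g x) ^ (p / 2) ∂μ =
      ENNReal.ofReal k * (∫⁻ x, f x ^ p ∂μ + ∫⁻ x, g x ^ p ∂μ) := by
    rw [lintegral_congr_ae heq, lintegral_const_mul _ hmeas,
      lintegral_add_left (hf.pow_const p)]
  have hTpos : 0 < (∫⁻ x, f x ^ p ∂μ).toReal + (∫⁻ x, g x ^ p ∂μ).toReal := by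
    rw [← ENNReal.toReal_add hfp hgp]
    exact ENNReal.toReal_pos hpos.ne' (ENNReal.add_ne_top.mpr ⟨hfp, hgp⟩)
  have hΓ2k : Γ = 2 * k := by
    rw [hΓ, hI, ENNReal.toReal_mul, ENNReal.toReal_ofReal hk0,
      ENNReal.toReal_add hfp hgp]
    field_simp
  rw [hΓ2k]
  -- pointwise equality
  have hd1 : Real.sqrt (1 - (2 * k) ^ 2) ≤ 1 := Real.sqrt_le_one.mpr (by nlinarith)
  have hC0 : 0 ≤ (((1 + Real.sqrt (1 - (2 * k) ^ 2)) / 2) ^ (1 / p) +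
      ((1 - Real.sqrt (1 - (2 * k) ^ 2)) / 2) ^ (1 / p)) ^ p :=
    Real.rpow_nonneg (add_nonneg
      (Real.rpow_nonneg (by positivity) _)
      (Real.rpow_nonneg (by linarith) _)) p
  have hae : ∀ᵐ x ∂μ, (f x + g x) ^ p =
      ENNReal.ofReal
          ((((1 + Real.sqrt (1 - (2 * k) ^ 2)) / 2) ^ (1 / p) +
            ((1 - Real.sqrt (1 - (2 * k) ^ 2)) / 2) ^ (1 / p)) ^ p) *
        (f x ^ p + g x ^ p) := by
    filter_upwards [heq] with x hx
    have hfu : f x = ENNReal.ofReal (f x).toReal := (ENNReal.ofReal_toReal (hffin x)).symm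
    have hgu : g x = ENNReal.ofReal (g x).toReal := (ENNReal.ofReal_toReal (hgfin x)).symm
    set u := (f x).toReal with hu
    set v := (g x).toReal with hv
    have hu0 : 0 ≤ u := ENNReal.toReal_nonneg
    have hv0 : 0 ≤ v := ENNReal.toReal_nonneg
    rw [hfu, hgu] at hx ⊢
    rw [← ENNReal.ofReal_mul hu0, ENNReal.ofReal_rpow_of_nonneg (mul_nonneg hu0 hv0) (by positivity),
      ENNReal.ofReal_rpow_of_nonneg hu0 hp.le, ENNReal.ofReal_rpow_of_nonneg hv0 hp.le,
      ← ENNReal.ofReal_add (by positivity) (by positivity),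
      ← ENNReal.ofReal_mul hk0,
      ENNReal.ofReal_eq_ofReal_iff (by positivity) (by positivity)] at hx
    rw [← ENNReal.ofReal_add hu0 hv0, ENNReal.ofReal_rpow_of_nonneg (by positivity) hp.le,
      ENNReal.ofReal_rpow_of_nonneg hu0 hp.le, ENNReal.ofReal_rpow_of_nonneg hv0 hp.le,
      ← ENNReal.ofReal_add (by positivity) (by positivity),
      ← ENNReal.ofReal_mul hC0]
    exact congrArg ENNReal.ofReal (key_real p k u v hp hk0 hk2 hu0 hv0 hx)
  rw [lintegral_congr_ae hae, lintegral_const_mul _ hmeas,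
    lintegral_add_left (hf.pow_const p)]
end

section
/- Let p < 0. For any measure space (X, 𝒜, μ) and any measurable f, g : X → (0,∞] (with the convention f^p = 0 where f = ∞) such that ∫ f^p dμ < ∞ and ∫ g^p dμ < ∞, setting C := min{∫ f^p dμ, ∫ g^p dμ, ∫ (fg)^{p/2} dμ} / ∫ (fg)^{p/2} dμ if ∫ (fg)^{p/2} dμ > 0 and C := 1 otherwise, one has ∫ (f+g)^p dμ ≤ (C^{−1/p} + C^{1/p})^p · ∫ (fg)^{p/2} dμ. -/
open MeasureTheory Real Set
open scoped ENNReal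

/-!
For `a ≥ 1` and `w = (a² - 1) / (a² + 1)`, AM-GM gives
`F + G ≥ (a + a⁻¹) (w F / a + (1 - w) √(FG))`, and `t ↦ t ^ p` is decreasing and convex on `(0, ∞)`
for `p < 0`; hence `(F + G) ^ p ≤ (a + a⁻¹) ^ p (w a ^ (-p) F ^ p + (1 - w) (FG) ^ (p / 2))`.
Integrate, and take `a = c ^ (1 / p)` with `c = min (∫ f ^ p, ∫ (fg) ^ (p / 2)) / ∫ (fg) ^ (p / 2)`:
either `a ^ (-p) ∫ f ^ p = ∫ (fg) ^ (p / 2)` or `a = 1, w = 0`, and in both cases the right side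
collapses to `(a + a⁻¹) ^ p ∫ (fg) ^ (p / 2)`. The constant `C` is the value of `c` for `f` or for `g`,
so one of the two symmetric bounds is the claim. Since `0 ^ p = ∞`, finiteness of `∫ f ^ p` makes
`f` nonzero a.e.
-/

theorem convexOn_rpow_of_nonpos {p : ℝ} (hp : p ≤ 0) : ConvexOn ℝ (Ioi 0) fun x : ℝ ↦ x ^ p := by
  refine ⟨convex_Ioi 0, fun x (hx : 0 < x) y (hy : 0 < y) a b ha hb hab ↦ ?_⟩
  have hlog : a * log x + b * log y ≤ log (a * x + b * y) :=
    strictConcaveOn_log_Ioi.concaveOn.2 hx hy ha hb hab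
  have hxy : 0 < a * x + b * y := by simpa using (convex_Ioi (0 : ℝ)) hx hy ha hb hab
  simp only [smul_eq_mul, rpow_def_of_pos hx, rpow_def_of_pos hy, rpow_def_of_pos hxy]
  calc exp (log (a * x + b * y) * p) ≤ exp (a * (log x * p) + b * (log y * p)) :=
        exp_le_exp.2 (by nlinarith)
    _ ≤ a * exp (log x * p) + b * exp (log y * p) := by
        simpa using convexOn_exp.2 (mem_univ (log x * p)) (mem_univ (log y * p)) ha hb hab

theorem Real.add_rpow_le_of_nonpos {p a F G : ℝ} (hp : p ≤ 0) (ha : 1 ≤ a) (hF : 0 < F)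
    (hG : 0 < G) :
    (F + G) ^ p ≤ (a + a⁻¹) ^ p *
      ((a ^ 2 - 1) / (a ^ 2 + 1) * a ^ (-p) * F ^ p + 2 / (a ^ 2 + 1) * (F * G) ^ (p / 2)) := by
  have ha0 : 0 < a := zero_lt_one.trans_le ha
  set w := (a ^ 2 - 1) / (a ^ 2 + 1) with hw_def
  have hw0 : 0 ≤ w := div_nonneg (by nlinarith) (by positivity)
  have hw1 : 1 - w = 2 / (a ^ 2 + 1) := by rw [hw_def]; field_simp; ring
  have hX : 0 < F / a := by positivity
  have hY : 0 < √(F * G) := by positivity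
  have hmean : 0 < w * (F / a) + (1 - w) * √(F * G) := by rw [hw1]; positivity
  have amgm : (a + a⁻¹) * (w * (F / a) + (1 - w) * √(F * G)) ≤ F + G := by
    have hw : (a ^ 2 + 1) * w = a ^ 2 - 1 := by rw [hw_def]; field_simp
    have hsF := Real.sq_sqrt hF.le
    have hsG := Real.sq_sqrt hG.le
    rw [hw1, Real.sqrt_mul hF.le]
    field_simp
    nlinarith [sq_nonneg (√F - a * √G)]
  calc (F + G) ^ p ≤ ((a + a⁻¹) * (w * (F / a) + (1 - w) * √(F * G))) ^ p :=
        rpow_le_rpow_of_nonpos (by positivity) amgm hp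
    _ = (a + a⁻¹) ^ p * (w * (F / a) + (1 - w) * √(F * G)) ^ p :=
        mul_rpow (by positivity) hmean.le
    _ ≤ (a + a⁻¹) ^ p * (w * (F / a) ^ p + (1 - w) * √(F * G) ^ p) := by
        gcongr
        exact (convexOn_rpow_of_nonpos hp).2 hX hY hw0 (by rw [hw1]; positivity) (by ring)
    _ = _ := by
        rw [hw1, div_rpow hF.le ha0.le, rpow_neg ha0.le, Real.sqrt_eq_rpow,
          ← rpow_mul (by positivity)]
        ring_nf

theorem ENNReal.add_rpow_le_of_neg {p a : ℝ} (hp : p < 0) (ha : 1 ≤ a) {x y : ℝ≥0∞}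
    (hx : x ≠ 0) (hy : y ≠ 0) :
    (x + y) ^ p ≤ ENNReal.ofReal ((a + a⁻¹) ^ p) *
      (ENNReal.ofReal ((a ^ 2 - 1) / (a ^ 2 + 1) * a ^ (-p)) * x ^ p +
        ENNReal.ofReal (2 / (a ^ 2 + 1)) * (x * y) ^ (p / 2)) := by
  rcases eq_or_ne x ⊤ with rfl | hxt
  · simp [ENNReal.top_rpow_of_neg hp]
  rcases eq_or_ne y ⊤ with rfl | hyt
  · simp [ENNReal.top_rpow_of_neg hp]
  have hF : 0 < x.toReal := ENNReal.toReal_pos hx hxt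
  have hG : 0 < y.toReal := ENNReal.toReal_pos hy hyt
  have hw0 : 0 ≤ (a ^ 2 - 1) / (a ^ 2 + 1) := div_nonneg (by nlinarith) (by positivity)
  rw [← ENNReal.ofReal_toReal hxt, ← ENNReal.ofReal_toReal hyt, ← ENNReal.ofReal_add hF.le hG.le,
    ← ENNReal.ofReal_mul hF.le, ENNReal.ofReal_rpow_of_pos (by positivity),
    ENNReal.ofReal_rpow_of_pos hF, ENNReal.ofReal_rpow_of_pos (by positivity),
    ← ENNReal.ofReal_mul (by positivity), ← ENNReal.ofReal_mul (by positivity),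
    ← ENNReal.ofReal_add (by positivity) (by positivity), ← ENNReal.ofReal_mul (by positivity)]
  exact ENNReal.ofReal_le_ofReal (Real.add_rpow_le_of_nonpos hp.le ha hF hG)

section Lintegral

variable {X : Type*} [MeasurableSpace X] {μ : Measure X} {p : ℝ} {f g : X → ℝ≥0∞}

theorem ae_ne_zero_of_lintegral_rpow_ne_top (hp : p < 0) (hf : AEMeasurable f μ)
    (hfp : ∫⁻ x, f x ^ p ∂μ ≠ ∞) : ∀ᵐ x ∂μ, f x ≠ 0 := by
  filter_upwards [ae_lt_top' (hf.pow_const p) hfp] with x hx hx0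
  simp [hx0, ENNReal.zero_rpow_of_neg hp] at hx

theorem lintegral_mul_rpow_div_two_le (hf : AEMeasurable f μ) (hg : AEMeasurable g μ)
    (hf0 : ∀ᵐ x ∂μ, f x ≠ 0) (hg0 : ∀ᵐ x ∂μ, g x ≠ 0) :
    ∫⁻ x, (f x * g x) ^ (p / 2) ∂μ ≤
      (∫⁻ x, f x ^ p ∂μ) ^ (1 / 2 : ℝ) * (∫⁻ x, g x ^ p ∂μ) ^ (1 / 2 : ℝ) := by
  have hsplit : (fun x ↦ (f x * g x) ^ (p / 2)) =ᵐ[μ]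
      fun x ↦ (f x ^ p) ^ (1 / 2 : ℝ) * (g x ^ p) ^ (1 / 2 : ℝ) := by
    filter_upwards [hf0, hg0] with x hfx hgx
    rw [ENNReal.mul_rpow_of_ne_zero hfx hgx, ← ENNReal.rpow_mul, ← ENNReal.rpow_mul]
    ring_nf
  rw [lintegral_congr_ae hsplit]
  exact ENNReal.lintegral_mul_norm_pow_le (hf.pow_const p) (hg.pow_const p) (by norm_num)
    (by norm_num) (by norm_num)

theorem lintegral_mul_rpow_eq_zero_of_lintegral_rpow_eq_zero (hp : p < 0)
    (hf : AEMeasurable f μ) (hg0 : ∀ᵐ x ∂μ, g x ≠ 0) (hA : ∫⁻ x, f x ^ p ∂μ = 0) :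
    ∫⁻ x, (f x * g x) ^ (p / 2) ∂μ = 0 := by
  have hf_top : ∀ᵐ x ∂μ, f x = ⊤ := by
    filter_upwards [(lintegral_eq_zero_iff' (hf.pow_const p)).1 hA] with x hx
    simpa [ENNReal.rpow_eq_zero_iff, hp, hp.not_gt] using hx
  rw [← lintegral_zero]
  refine lintegral_congr_ae ?_
  filter_upwards [hf_top, hg0] with x hfx hgx
  simp [hfx, ENNReal.top_mul hgx, ENNReal.top_rpow_of_neg (by linarith : p / 2 < 0)]

theorem lintegral_add_rpow_le_of_neg {a : ℝ} (hp : p < 0) (ha : 1 ≤ a) (hf : Measurable f)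
    (hf0 : ∀ᵐ x ∂μ, f x ≠ 0) (hg0 : ∀ᵐ x ∂μ, g x ≠ 0) :
    ∫⁻ x, (f x + g x) ^ p ∂μ ≤ ENNReal.ofReal ((a + a⁻¹) ^ p) *
      (ENNReal.ofReal ((a ^ 2 - 1) / (a ^ 2 + 1) * a ^ (-p)) * ∫⁻ x, f x ^ p ∂μ +
        ENNReal.ofReal (2 / (a ^ 2 + 1)) * ∫⁻ x, (f x * g x) ^ (p / 2) ∂μ) := by
  calc ∫⁻ x, (f x + g x) ^ p ∂μ
      ≤ ∫⁻ x, ENNReal.ofReal ((a + a⁻¹) ^ p) *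
          (ENNReal.ofReal ((a ^ 2 - 1) / (a ^ 2 + 1) * a ^ (-p)) * f x ^ p +
            ENNReal.ofReal (2 / (a ^ 2 + 1)) * (f x * g x) ^ (p / 2)) ∂μ := by
        refine lintegral_mono_ae ?_
        filter_upwards [hf0, hg0] with x hfx hgx
        exact ENNReal.add_rpow_le_of_neg hp ha hfx hgx
    _ = _ := by
        rw [lintegral_const_mul' _ _ ENNReal.ofReal_ne_top,
          lintegral_add_left ((hf.pow_const p).const_mul _),
          lintegral_const_mul' _ _ ENNReal.ofReal_ne_top,
          lintegral_const_mul' _ _ ENNReal.ofReal_ne_top]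

theorem lintegral_add_rpow_le_of_rpow_mul_le {a : ℝ} (hp : p < 0) (ha : 1 ≤ a)
    (hf : Measurable f) (hf0 : ∀ᵐ x ∂μ, f x ≠ 0) (hg0 : ∀ᵐ x ∂μ, g x ≠ 0)
    (hA : ENNReal.ofReal (a ^ (-p)) * ∫⁻ x, f x ^ p ∂μ ≤ ∫⁻ x, (f x * g x) ^ (p / 2) ∂μ) :
    ∫⁻ x, (f x + g x) ^ p ∂μ ≤
      ENNReal.ofReal ((a + a⁻¹) ^ p) * ∫⁻ x, (f x * g x) ^ (p / 2) ∂μ := by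
  have hw0 : 0 ≤ (a ^ 2 - 1) / (a ^ 2 + 1) := div_nonneg (by nlinarith) (by positivity)
  have hw : (a ^ 2 - 1) / (a ^ 2 + 1) + 2 / (a ^ 2 + 1) = 1 := by field_simp; ring
  refine (lintegral_add_rpow_le_of_neg hp ha hf hf0 hg0).trans ?_
  gcongr
  calc ENNReal.ofReal ((a ^ 2 - 1) / (a ^ 2 + 1) * a ^ (-p)) * ∫⁻ x, f x ^ p ∂μ +
        ENNReal.ofReal (2 / (a ^ 2 + 1)) * ∫⁻ x, (f x * g x) ^ (p / 2) ∂μ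
      ≤ ENNReal.ofReal ((a ^ 2 - 1) / (a ^ 2 + 1)) * ∫⁻ x, (f x * g x) ^ (p / 2) ∂μ +
        ENNReal.ofReal (2 / (a ^ 2 + 1)) * ∫⁻ x, (f x * g x) ^ (p / 2) ∂μ := by
        rw [ENNReal.ofReal_mul hw0, mul_assoc]
        gcongr
    _ = ∫⁻ x, (f x * g x) ^ (p / 2) ∂μ := by
        rw [← add_mul, ← ENNReal.ofReal_add hw0 (by positivity), hw, ENNReal.ofReal_one, one_mul]

theorem lintegral_add_rpow_le_two_rpow_mul (hp : p < 0) (hf : Measurable f)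
    (hf0 : ∀ᵐ x ∂μ, f x ≠ 0) (hg0 : ∀ᵐ x ∂μ, g x ≠ 0) :
    ∫⁻ x, (f x + g x) ^ p ∂μ ≤ ENNReal.ofReal (2 ^ p) * ∫⁻ x, (f x * g x) ^ (p / 2) ∂μ := by
  simpa [one_add_one_eq_two] using lintegral_add_rpow_le_of_neg (a := 1) hp le_rfl hf hf0 hg0

theorem lintegral_add_rpow_le_of_min_div (hp : p < 0) (hf : Measurable f)
    (hf0 : ∀ᵐ x ∂μ, f x ≠ 0) (hg0 : ∀ᵐ x ∂μ, g x ≠ 0) (hfp : ∫⁻ x, f x ^ p ∂μ ≠ ∞)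
    (hM : ∫⁻ x, (f x * g x) ^ (p / 2) ∂μ ≠ 0) (hMtop : ∫⁻ x, (f x * g x) ^ (p / 2) ∂μ ≠ ∞)
    {c : ℝ} (hc : c = min (∫⁻ x, f x ^ p ∂μ).toReal (∫⁻ x, (f x * g x) ^ (p / 2) ∂μ).toReal /
      (∫⁻ x, (f x * g x) ^ (p / 2) ∂μ).toReal) :
    ∫⁻ x, (f x + g x) ^ p ∂μ ≤
      ENNReal.ofReal ((c ^ (-(1 / p)) + c ^ (1 / p)) ^ p) * ∫⁻ x, (f x * g x) ^ (p / 2) ∂μ := by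
  set A := ∫⁻ x, f x ^ p ∂μ
  set M := ∫⁻ x, (f x * g x) ^ (p / 2) ∂μ
  have hA : 0 < A.toReal := ENNReal.toReal_pos
    (fun h ↦ hM (lintegral_mul_rpow_eq_zero_of_lintegral_rpow_eq_zero hp hf.aemeasurable hg0 h))
    hfp
  have hM' : 0 < M.toReal := ENNReal.toReal_pos hM hMtop
  rcases le_total A.toReal M.toReal with hle | hle
  · rw [min_eq_left hle] at hc
    have hc0 : 0 < c := hc ▸ div_pos hA hM'
    have ha : 1 ≤ c ^ (1 / p) := one_le_rpow_of_pos_of_le_one_of_nonpos hc0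
      (hc ▸ (div_le_one hM').2 hle) (one_div_neg.2 hp).le
    have hapow : (c ^ (1 / p)) ^ (-p) * A.toReal = M.toReal := by
      rw [← rpow_mul hc0.le, show 1 / p * -p = -1 by field_simp [hp.ne], rpow_neg_one, hc,
        inv_div, div_mul_cancel₀ _ hA.ne']
    rw [rpow_neg hc0.le, add_comm]
    refine lintegral_add_rpow_le_of_rpow_mul_le hp ha hf hf0 hg0 (le_of_eq ?_)
    change ENNReal.ofReal _ * A = M
    rw [← ENNReal.ofReal_toReal hfp, ← ENNReal.ofReal_mul (by positivity), hapow,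
      ENNReal.ofReal_toReal hMtop]
  · have hc1 : c = 1 := by rw [hc, min_eq_right hle, div_self hM'.ne']
    rw [hc1, one_rpow, one_rpow, one_add_one_eq_two]
    exact lintegral_add_rpow_le_two_rpow_mul hp hf hf0 hg0

end Lintegral

theorem statement6_general
    {X : Type*} [MeasurableSpace X] (μ : Measure X) (p : ℝ)
    (hp : p < 0)
    (f g : X → ℝ≥0∞) (hf : Measurable f) (hg : Measurable g)
    (hfp : ∫⁻ x, f x ^ p ∂μ ≠ ∞) (hgp : ∫⁻ x, g x ^ p ∂μ ≠ ∞)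
    (C : ℝ)
    (hC : C = if 0 < ∫⁻ x, (f x * g x) ^ (p / 2) ∂μ then
        min (min (∫⁻ x, f x ^ p ∂μ).toReal (∫⁻ x, g x ^ p ∂μ).toReal)
            (∫⁻ x, (f x * g x) ^ (p / 2) ∂μ).toReal /
          (∫⁻ x, (f x * g x) ^ (p / 2) ∂μ).toReal
      else 1) :
    ∫⁻ x, (f x + g x) ^ p ∂μ ≤
      ENNReal.ofReal ((C ^ (-(1 / p)) + C ^ (1 / p)) ^ p) *
        ∫⁻ x, (f x * g x) ^ (p / 2) ∂μ := by
  have hf0 := ae_ne_zero_of_lintegral_rpow_ne_top hp hf.aemeasurable hfp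
  have hg0 := ae_ne_zero_of_lintegral_rpow_ne_top hp hg.aemeasurable hgp
  by_cases hM : ∫⁻ x, (f x * g x) ^ (p / 2) ∂μ = 0
  · simpa [hM] using lintegral_add_rpow_le_two_rpow_mul hp hf hf0 hg0
  have hMtop : ∫⁻ x, (f x * g x) ^ (p / 2) ∂μ ≠ ∞ :=
    ((lintegral_mul_rpow_div_two_le hf.aemeasurable hg.aemeasurable hf0 hg0).trans_lt
      (ENNReal.mul_lt_top (ENNReal.rpow_lt_top_of_nonneg (by norm_num) hfp)
        (ENNReal.rpow_lt_top_of_nonneg (by norm_num) hgp))).ne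
  rw [if_pos (pos_iff_ne_zero.2 hM), inf_inf_distrib_right,
    ← min_div_div_right ENNReal.toReal_nonneg, min_def] at hC
  have hswap_add : ∫⁻ x, (g x + f x) ^ p ∂μ = ∫⁻ x, (f x + g x) ^ p ∂μ := by simp_rw [add_comm]
  have hswap_mul : ∫⁻ x, (g x * f x) ^ (p / 2) ∂μ = ∫⁻ x, (f x * g x) ^ (p / 2) ∂μ := by
    simp_rw [mul_comm]
  split_ifs at hC
  · exact lintegral_add_rpow_le_of_min_div hp hf hf0 hg0 hfp hM hMtop hC
  · rw [← hswap_mul] at hM hMtop hC ⊢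
    rw [← hswap_add]
    exact lintegral_add_rpow_le_of_min_div hp hg hg0 hf0 hgp hM hMtop hC

/-- Theorem 2 for `p < 0`:
`‖f+g‖_p^p ≤ (C^{-1/p} + C^{1/p})^p ‖fg‖_{p/2}^{p/2}`; the functions take values in `(0,∞]`,
with the convention `f^p = 0` where `f = ∞` (built into `ENNReal.rpow`). -/
theorem statement6
    {X : Type*} [MeasurableSpace X] (μ : Measure X) (p : ℝ)
    (hp : p < 0)
    (f g : X → ℝ≥0∞) (hf : Measurable f) (hg : Measurable g)
    (hfpos : ∀ x, 0 < f x) (hgpos : ∀ x, 0 < g x)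
    (hfp : ∫⁻ x, f x ^ p ∂μ ≠ ∞) (hgp : ∫⁻ x, g x ^ p ∂μ ≠ ∞)
    (C : ℝ)
    (hC : C = if 0 < ∫⁻ x, (f x * g x) ^ (p / 2) ∂μ then
        min (min (∫⁻ x, f x ^ p ∂μ).toReal (∫⁻ x, g x ^ p ∂μ).toReal)
            (∫⁻ x, (f x * g x) ^ (p / 2) ∂μ).toReal /
          (∫⁻ x, (f x * g x) ^ (p / 2) ∂μ).toReal
      else 1) :
    ∫⁻ x, (f x + g x) ^ p ∂μ ≤
      ENNReal.ofReal ((C ^ (-(1 / p)) + C ^ (1 / p)) ^ p) *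
        ∫⁻ x, (f x * g x) ^ (p / 2) ∂μ :=
  statement6_general μ p hp f g hf hg hfp hgp C hC
end

section
/- Let p ∈ (1,2), let (X, 𝒜, μ) be a measure space and let f, g : X → [0,∞) be measurable with ∫ f^p dμ < ∞ and ∫ g^p dμ < ∞. Suppose one of the following holds: (i) f = g μ-a.e. on the set {fg > 0}; (ii) there is λ ≥ 1 with g = λ f μ-a.e. on {f > 0}; (iii) there is λ ≥ 1 with f = λ g μ-a.e. on {g > 0}. Then, with C := min{∫ f^p dμ, ∫ g^p dμ, ∫ (fg)^{p/2} dμ} / ∫ (fg)^{p/2} dμ if ∫ (fg)^{p/2} dμ > 0 and C := 1 otherwise, equality holds: ∫ (f+g)^p dμ = ∫ f^p dμ + ∫ g^p dμ + ( (C^{−1/p} + C^{1/p})^p − C^{−1} − C ) · ∫ (fg)^{p/2} dμ. -/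
open MeasureTheory Real Set
open scoped ENNReal

/-!
Where `f g = 0` we have `(f + g)^p = f^p + g^p`, and on `{f g > 0}` each hypothesis makes one of
`f, g` a fixed multiple `l ≥ 1` of the other (`l = 1` in case (i)). Hence a.e.
`(f + g)^p = f^p + g^p + c (f g)^{p/2}` with `c = ((1 + l)^p - 1 - l^p) / l^{p/2}`, and integrating
gives the identity with constant `c`. It remains to see that `C = l^{-p/2}` when
`∫ (f g)^{p/2} ≠ 0`: in case (i) the minimum is `∫ (f g)^{p/2}` itself, and in case (ii) it is
`∫ f^p` while `∫ (f g)^{p/2} = l^{p/2} ∫ f^p`. Substituting `C = l^{-p/2}` turns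
`(C^{-1/p} + C^{1/p})^p - C^{-1} - C` into `c`. Case (iii) is case (ii) with `f` and `g` swapped.
-/

noncomputable def crossCoeff (p l : ℝ) : ℝ := ((1 + l) ^ p - 1 - l ^ p) / l ^ (p / 2)

lemma crossCoeff_nonneg {p l : ℝ} (hp : 1 ≤ p) (hl : 0 ≤ l) : 0 ≤ crossCoeff p l := by
  have h := Real.add_rpow_le_rpow_add zero_le_one hl hp
  rw [Real.one_rpow] at h
  exact div_nonneg (by linarith) (rpow_nonneg hl _)

lemma one_add_rpow_eq_crossCoeff {p l : ℝ} (hl : 0 < l) :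
    (1 + l) ^ p = 1 + l ^ p + crossCoeff p l * l ^ (p / 2) := by
  have : l ^ (p / 2) ≠ 0 := (rpow_pos_of_pos hl _).ne'
  unfold crossCoeff
  field_simp
  ring

noncomputable def pairingConst (p C : ℝ) : ℝ := (C ^ (-(1 / p)) + C ^ (1 / p)) ^ p - C⁻¹ - C

lemma pairingConst_rpow_neg_half {p l : ℝ} (hp : p ≠ 0) (hl : 0 < l) :
    pairingConst p (l ^ (-(p / 2))) = crossCoeff p l := by
  -- both sides are `l ^ (1 / 2)`
  have hsqrt : (l ^ (-(p / 2))) ^ (-(1 / p)) = l * (l ^ (-(p / 2))) ^ (1 / p) := by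
    rw [← rpow_mul hl.le, ← rpow_mul hl.le, ← rpow_one_add' hl.le (by field_simp; norm_num)]
    congr 1
    field_simp
    ring
  have hpow : ((l ^ (-(p / 2))) ^ (1 / p)) ^ p = l ^ (-(p / 2)) := by
    rw [← rpow_mul (rpow_nonneg hl.le _), one_div_mul_cancel hp, rpow_one]
  have hsq : l ^ p = l ^ (p / 2) * l ^ (p / 2) := by
    rw [← rpow_add hl]
    ring_nf
  have hu : l ^ (p / 2) ≠ 0 := (rpow_pos_of_pos hl _).ne'
  unfold pairingConst
  rw [hsqrt, ← add_one_mul, add_comm l 1, mul_comm,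
    Real.mul_rpow (by positivity) (by positivity), hpow, rpow_neg hl.le, inv_inv]
  unfold crossCoeff
  rw [hsq]
  field_simp
  ring

namespace ENNReal

lemma mul_self_rpow_half (a : ℝ≥0∞) (p : ℝ) : (a * a) ^ (p / 2) = a ^ p := by
  rw [← pow_two, ← rpow_two, ← rpow_mul]
  ring_nf

lemma one_add_ofReal_rpow {p l : ℝ} (hp : 1 ≤ p) (hl : 0 < l) :
    (1 + ENNReal.ofReal l) ^ p = 1 + ENNReal.ofReal l ^ p +
      ENNReal.ofReal (crossCoeff p l) * ENNReal.ofReal l ^ (p / 2) := by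
  rw [← ofReal_one, ← ofReal_add zero_le_one hl.le, ofReal_rpow_of_pos (by linarith),
    ofReal_rpow_of_pos hl, ofReal_rpow_of_pos hl, ← ofReal_mul (crossCoeff_nonneg hp hl.le),
    ← ofReal_add zero_le_one (by positivity),
    ← ofReal_add (by positivity) (mul_nonneg (crossCoeff_nonneg hp hl.le) (by positivity)),
    one_add_rpow_eq_crossCoeff hl]

lemma rpow_add_eq_of_mul_pos {p l : ℝ} (hp : 1 ≤ p) (hl : 0 < l) {a b : ℝ≥0∞}
    (hab : 0 < a * b → b = ENNReal.ofReal l * a) :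
    (a + b) ^ p = a ^ p + b ^ p + ENNReal.ofReal (crossCoeff p l) * (a * b) ^ (p / 2) := by
  have hp0 : 0 < p := by linarith
  rcases eq_zero_or_pos (a * b) with h0 | hpos
  · rw [h0, zero_rpow_of_pos (by linarith), mul_zero, add_zero]
    rcases mul_eq_zero.1 h0 with rfl | rfl <;> simp [zero_rpow_of_pos hp0]
  · rw [hab hpos, mul_left_comm, mul_rpow_of_nonneg (ENNReal.ofReal l) (a * a) (by linarith),
      mul_self_rpow_half, ← one_add_mul, mul_rpow_of_nonneg _ a hp0.le,
      mul_rpow_of_nonneg _ a hp0.le, one_add_ofReal_rpow hp hl]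
    ring

end ENNReal

section

variable {X : Type*} [MeasurableSpace X] (μ : Measure X) {p : ℝ} {f g : X → ℝ≥0∞}

lemma lintegral_rpow_add_of_ae_eq_mul (hp : 1 ≤ p) (hf : Measurable f) (hg : Measurable g)
    {l : ℝ} (hl : 0 < l) (hfg : ∀ᵐ x ∂μ, 0 < f x * g x → g x = ENNReal.ofReal l * f x) :
    ∫⁻ x, (f x + g x) ^ p ∂μ = ∫⁻ x, f x ^ p ∂μ + ∫⁻ x, g x ^ p ∂μ +
      ENNReal.ofReal (crossCoeff p l) * ∫⁻ x, (f x * g x) ^ (p / 2) ∂μ := by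
  rw [lintegral_congr_ae (hfg.mono fun x hx => ENNReal.rpow_add_eq_of_mul_pos hp hl hx),
    lintegral_add_left (f := fun x => f x ^ p + g x ^ p) ((hf.pow_const p).add (hg.pow_const p)),
    lintegral_add_left (hf.pow_const p),
    lintegral_const_mul' _ _ ENNReal.ofReal_ne_top]

noncomputable def pairingRatio (μ : Measure X) (p : ℝ) (f g : X → ℝ≥0∞) : ℝ :=
  if 0 < ∫⁻ x, (f x * g x) ^ (p / 2) ∂μ then
    min (min (∫⁻ x, f x ^ p ∂μ).toReal (∫⁻ x, g x ^ p ∂μ).toReal)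
        (∫⁻ x, (f x * g x) ^ (p / 2) ∂μ).toReal /
      (∫⁻ x, (f x * g x) ^ (p / 2) ∂μ).toReal
  else 1

lemma pairingRatio_comm : pairingRatio μ p g f = pairingRatio μ p f g := by
  simp only [pairingRatio, mul_comm (g _), min_comm (∫⁻ x, g x ^ p ∂μ).toReal]

lemma lintegral_rpow_add_of_pairingRatio (hp : 1 ≤ p) (hf : Measurable f) (hg : Measurable g)
    {l : ℝ} (hl : 0 < l) (hfg : ∀ᵐ x ∂μ, 0 < f x * g x → g x = ENNReal.ofReal l * f x)
    (hC : ∫⁻ x, (f x * g x) ^ (p / 2) ∂μ ≠ 0 → pairingRatio μ p f g = l ^ (-(p / 2))) :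
    ∫⁻ x, (f x + g x) ^ p ∂μ = ∫⁻ x, f x ^ p ∂μ + ∫⁻ x, g x ^ p ∂μ +
      ENNReal.ofReal (pairingConst p (pairingRatio μ p f g)) *
        ∫⁻ x, (f x * g x) ^ (p / 2) ∂μ := by
  rw [lintegral_rpow_add_of_ae_eq_mul μ hp hf hg hl hfg]
  by_cases hI : ∫⁻ x, (f x * g x) ^ (p / 2) ∂μ = 0
  · simp [hI]
  · rw [hC hI, pairingConst_rpow_neg_half (by linarith) hl]

lemma lintegral_mul_rpow_half_le_of_ae_eq (hp : 0 < p)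
    (hfg : ∀ᵐ x ∂μ, 0 < f x * g x → f x = g x) :
    ∫⁻ x, (f x * g x) ^ (p / 2) ∂μ ≤ ∫⁻ x, f x ^ p ∂μ := by
  refine lintegral_mono_ae (hfg.mono fun x hx => ?_)
  rcases eq_zero_or_pos (f x * g x) with h0 | hpos
  · simp [h0, ENNReal.zero_rpow_of_pos (half_pos hp)]
  · rw [← hx hpos, ENNReal.mul_self_rpow_half]

lemma pairingRatio_eq_one_of_ae_eq (hp : 0 < p) (hfp : ∫⁻ x, f x ^ p ∂μ ≠ ∞)
    (hgp : ∫⁻ x, g x ^ p ∂μ ≠ ∞) (hfg : ∀ᵐ x ∂μ, 0 < f x * g x → f x = g x) :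
    pairingRatio μ p f g = 1 := by
  have hIf := lintegral_mul_rpow_half_le_of_ae_eq μ hp hfg
  have hIg : ∫⁻ x, (f x * g x) ^ (p / 2) ∂μ ≤ ∫⁻ x, g x ^ p ∂μ := by
    simpa only [mul_comm (g _)] using lintegral_mul_rpow_half_le_of_ae_eq μ hp
      (hfg.mono fun x hx hpos => (hx (by rwa [mul_comm])).symm)
  unfold pairingRatio
  split_ifs with hI
  · rw [min_eq_right (le_min (ENNReal.toReal_mono hfp hIf) (ENNReal.toReal_mono hgp hIg)),
      div_self (ENNReal.toReal_pos hI.ne' (ne_top_of_le_ne_top hfp hIf)).ne']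
  · rfl

lemma lintegral_mul_rpow_half_eq_of_ae_eq_mul (hp : 0 < p) (hf : Measurable f) {L : ℝ≥0∞}
    (hfg : ∀ᵐ x ∂μ, 0 < f x → g x = L * f x) :
    ∫⁻ x, (f x * g x) ^ (p / 2) ∂μ = L ^ (p / 2) * ∫⁻ x, f x ^ p ∂μ := by
  rw [← lintegral_const_mul _ (hf.pow_const p)]
  refine lintegral_congr_ae (hfg.mono fun x hx => ?_)
  rcases eq_zero_or_pos (f x) with h0 | hpos
  · simp [h0, ENNReal.zero_rpow_of_pos hp, ENNReal.zero_rpow_of_pos (half_pos hp)]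
  · simp only
    rw [hx hpos, mul_left_comm, ENNReal.mul_rpow_of_nonneg _ _ (half_pos hp).le,
      ENNReal.mul_self_rpow_half]

lemma lintegral_rpow_le_of_ae_eq_mul (hp : 0 < p) {L : ℝ≥0∞} (hL : 1 ≤ L)
    (hfg : ∀ᵐ x ∂μ, 0 < f x → g x = L * f x) :
    ∫⁻ x, f x ^ p ∂μ ≤ ∫⁻ x, g x ^ p ∂μ := by
  refine lintegral_mono_ae (hfg.mono fun x hx => ?_)
  rcases eq_zero_or_pos (f x) with h0 | hpos
  · simp [h0, ENNReal.zero_rpow_of_pos hp]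
  · rw [hx hpos]
    exact ENNReal.rpow_le_rpow (le_mul_of_one_le_left zero_le hL) hp.le

lemma pairingRatio_eq_rpow_of_ae_eq_mul (hp : 0 < p) (hf : Measurable f)
    (hfp : ∫⁻ x, f x ^ p ∂μ ≠ ∞) (hgp : ∫⁻ x, g x ^ p ∂μ ≠ ∞) {l : ℝ} (hl : 1 ≤ l)
    (hfg : ∀ᵐ x ∂μ, 0 < f x → g x = ENNReal.ofReal l * f x)
    (hI : ∫⁻ x, (f x * g x) ^ (p / 2) ∂μ ≠ 0) :
    pairingRatio μ p f g = l ^ (-(p / 2)) := by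
  have hIf := lintegral_mul_rpow_half_eq_of_ae_eq_mul μ hp hf hfg
  have hfg' := lintegral_rpow_le_of_ae_eq_mul μ hp (ENNReal.one_le_ofReal.2 hl) hfg
  have hl1 : 1 ≤ l ^ (p / 2) := one_le_rpow hl (half_pos hp).le
  rw [ENNReal.ofReal_rpow_of_pos (by linarith)] at hIf
  have hIf' : (∫⁻ x, (f x * g x) ^ (p / 2) ∂μ).toReal =
      l ^ (p / 2) * (∫⁻ x, f x ^ p ∂μ).toReal := by
    rw [hIf, ENNReal.toReal_mul, ENNReal.toReal_ofReal (by positivity)]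
  have hf0 : (∫⁻ x, f x ^ p ∂μ).toReal ≠ 0 :=
    ENNReal.toReal_ne_zero.2 ⟨fun h => hI (by rw [hIf, h, mul_zero]), hfp⟩
  rw [pairingRatio, if_pos (pos_iff_ne_zero.2 hI), hIf',
    min_eq_left (ENNReal.toReal_mono hgp hfg'), min_eq_left (le_mul_of_one_le_left
    ENNReal.toReal_nonneg hl1), rpow_neg (by linarith)]
  field_simp

lemma lintegral_rpow_add_of_ae_eq_mul_on_pos (hp : 1 ≤ p) (hf : Measurable f)
    (hg : Measurable g) (hfp : ∫⁻ x, f x ^ p ∂μ ≠ ∞) (hgp : ∫⁻ x, g x ^ p ∂μ ≠ ∞) {l : ℝ}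
    (hl : 1 ≤ l) (hfg : ∀ᵐ x ∂μ, 0 < f x → g x = ENNReal.ofReal l * f x) :
    ∫⁻ x, (f x + g x) ^ p ∂μ = ∫⁻ x, f x ^ p ∂μ + ∫⁻ x, g x ^ p ∂μ +
      ENNReal.ofReal (pairingConst p (pairingRatio μ p f g)) *
        ∫⁻ x, (f x * g x) ^ (p / 2) ∂μ :=
  lintegral_rpow_add_of_pairingRatio μ hp hf hg (by linarith)
    (hfg.mono fun _ hx hpos => hx (pos_of_mul_pos_left hpos zero_le))
    (pairingRatio_eq_rpow_of_ae_eq_mul μ (by linarith) hf hfp hgp hl hfg)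

end

theorem statement7_general
    {X : Type*} [MeasurableSpace X] (μ : Measure X) (p : ℝ)
    (hp : p ∈ Set.Ioo (1 : ℝ) 2)
    (f g : X → ℝ≥0∞) (hf : Measurable f) (hg : Measurable g)
    (hfp : ∫⁻ x, f x ^ p ∂μ ≠ ∞) (hgp : ∫⁻ x, g x ^ p ∂μ ≠ ∞)
    (hcase :
      (∀ᵐ x ∂μ, 0 < f x * g x → f x = g x) ∨
      (∃ l : ℝ, 1 ≤ l ∧ ∀ᵐ x ∂μ, 0 < f x → g x = ENNReal.ofReal l * f x) ∨
      (∃ l : ℝ, 1 ≤ l ∧ ∀ᵐ x ∂μ, 0 < g x → f x = ENNReal.ofReal l * g x))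
    (C : ℝ)
    (hC : C = if 0 < ∫⁻ x, (f x * g x) ^ (p / 2) ∂μ then
        min (min (∫⁻ x, f x ^ p ∂μ).toReal (∫⁻ x, g x ^ p ∂μ).toReal)
            (∫⁻ x, (f x * g x) ^ (p / 2) ∂μ).toReal /
          (∫⁻ x, (f x * g x) ^ (p / 2) ∂μ).toReal
      else 1) :
    ∫⁻ x, (f x + g x) ^ p ∂μ =
      ∫⁻ x, f x ^ p ∂μ + ∫⁻ x, g x ^ p ∂μ +
        ENNReal.ofReal ((C ^ (-(1 / p)) + C ^ (1 / p)) ^ p - C⁻¹ - C) *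
          ∫⁻ x, (f x * g x) ^ (p / 2) ∂μ := by
  change C = pairingRatio μ p f g at hC
  change _ = _ + _ + ENNReal.ofReal (pairingConst p C) * _
  have hp1 : 1 ≤ p := hp.1.le
  subst hC
  rcases hcase with hfg | ⟨l, hl, hfg⟩ | ⟨l, hl, hgf⟩
  · refine lintegral_rpow_add_of_pairingRatio μ hp1 hf hg one_pos
      (hfg.mono fun x hx hpos => by rw [ENNReal.ofReal_one, one_mul, hx hpos]) fun _ => ?_
    rw [one_rpow, pairingRatio_eq_one_of_ae_eq μ (by linarith) hfp hgp hfg]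
  · exact lintegral_rpow_add_of_ae_eq_mul_on_pos μ hp1 hf hg hfp hgp hl hfg
  · have h := lintegral_rpow_add_of_ae_eq_mul_on_pos μ hp1 hg hf hgp hfp hl hgf
    simp only [add_comm (g _), mul_comm (g _), pairingRatio_comm] at h
    rwa [add_comm (∫⁻ x, f x ^ p ∂μ)]

/-- Equality cases in Theorem 2 for `p ∈ (1,2)`: equality holds in (pir2) if
`f = g` a.e. on `{fg > 0}`, or `g = λ f` a.e. on `{f > 0}` for some `λ ≥ 1`, or
`f = λ g` a.e. on `{g > 0}` for some `λ ≥ 1`. -/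
theorem statement7
    {X : Type*} [MeasurableSpace X] (μ : Measure X) (p : ℝ)
    (hp : p ∈ Set.Ioo (1 : ℝ) 2)
    (f g : X → ℝ≥0∞) (hf : Measurable f) (hg : Measurable g)
    (hffin : ∀ x, f x ≠ ∞) (hgfin : ∀ x, g x ≠ ∞)
    (hfp : ∫⁻ x, f x ^ p ∂μ ≠ ∞) (hgp : ∫⁻ x, g x ^ p ∂μ ≠ ∞)
    (hcase :
      (∀ᵐ x ∂μ, 0 < f x * g x → f x = g x) ∨
      (∃ l : ℝ, 1 ≤ l ∧ ∀ᵐ x ∂μ, 0 < f x → g x = ENNReal.ofReal l * f x) ∨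
      (∃ l : ℝ, 1 ≤ l ∧ ∀ᵐ x ∂μ, 0 < g x → f x = ENNReal.ofReal l * g x))
    (C : ℝ)
    (hC : C = if 0 < ∫⁻ x, (f x * g x) ^ (p / 2) ∂μ then
        min (min (∫⁻ x, f x ^ p ∂μ).toReal (∫⁻ x, g x ^ p ∂μ).toReal)
            (∫⁻ x, (f x * g x) ^ (p / 2) ∂μ).toReal /
          (∫⁻ x, (f x * g x) ^ (p / 2) ∂μ).toReal
      else 1) :
    ∫⁻ x, (f x + g x) ^ p ∂μ =
      ∫⁻ x, f x ^ p ∂μ + ∫⁻ x, g x ^ p ∂μ +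
        ENNReal.ofReal ((C ^ (-(1 / p)) + C ^ (1 / p)) ^ p - C⁻¹ - C) *
          ∫⁻ x, (f x * g x) ^ (p / 2) ∂μ :=
  statement7_general μ p hp f g hf hg hfp hgp hcase C hC
end

section
/- Let p ∈ [1,2], let (X, 𝒜, μ) be a measure space and let (f_j)_{j≥1} be a sequence of measurable functions f_j : X → [0,∞). Then ∫ (∑_j f_j)^p dμ ≤ ∑_j ∫ f_j^p dμ + (2^p − 2) · ∑_{i<j} ∫ (f_i f_j)^{p/2} dμ, where the sums on the right range over all j ≥ 1 and all pairs i < j, and both sides are interpreted in [0,∞]. -/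
open MeasureTheory Real Set
open scoped ENNReal

/-!
Everything is integrated from the two-point inequality
`(a + b)^p ≤ a^p + b^p + (2^p - 2) (a b)^(p/2)`, `a, b ≥ 0`. By homogeneity it reduces to
`(a, b) = (t, 1)` with `t ∈ (0, 1]`, where it says that `((1 + t)^p - 1 - t^p) / t^(p/2)` is
bounded by its value `2^p - 2` at `t = 1`. This ratio increases on `(0, 1]`: its derivative has
the sign of `(t - 1)(1 + t)^(p-1) + 1 - t^p`, which is nonnegative by Bernoulli's inequality for
the exponent `p - 1 ∈ [0, 1]`. For a sequence, add one term at a time: the cross term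
`(S_n a_n)^(p/2)` of the partial sum `S_n` with the next term splits into
`∑_{i<n} (a_i a_n)^(p/2)` because `x ↦ x^(p/2)` is subadditive. Then let `n → ∞` and integrate
termwise.
-/

lemma Real.rpow_le_two_sub_mul_add_sub_one_mul_sq {p u : ℝ} (hp1 : 1 ≤ p) (hp2 : p ≤ 2)
    (hu : 0 ≤ u) :
    u ^ p ≤ (2 - p) * u + (p - 1) * u ^ 2 := by
  rcases hu.eq_or_lt with rfl | hu
  · simp [zero_rpow (by linarith : p ≠ 0)]
  have hbern : u ^ (p - 1) ≤ 1 + (p - 1) * (u - 1) := by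
    simpa using rpow_one_add_le_one_add_mul_self (s := u - 1) (by linarith)
      (by linarith : 0 ≤ p - 1) (by linarith)
  calc u ^ p = u * u ^ (p - 1) := by rw [rpow_sub_one hu.ne']; field_simp
    _ ≤ u * (1 + (p - 1) * (u - 1)) := by gcongr
    _ = (2 - p) * u + (p - 1) * u ^ 2 := by ring

lemma Real.one_sub_mul_one_add_rpow_sub_one_le {p u : ℝ} (hp1 : 1 ≤ p) (hp2 : p ≤ 2) (hu0 : 0 ≤ u)
    (hu1 : u ≤ 1) : (1 - u) * (1 + u) ^ (p - 1) ≤ 1 - u ^ p := by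
  have hbern : (1 + u) ^ (p - 1) ≤ 1 + (p - 1) * u :=
    rpow_one_add_le_one_add_mul_self (by linarith) (by linarith) (by linarith)
  calc (1 - u) * (1 + u) ^ (p - 1) ≤ (1 - u) * (1 + (p - 1) * u) := by gcongr
    _ = 1 - ((2 - p) * u + (p - 1) * u ^ 2) := by ring
    _ ≤ 1 - u ^ p := by linarith [rpow_le_two_sub_mul_add_sub_one_mul_sq hp1 hp2 hu0]

noncomputable def superadditivityRatio (p t : ℝ) : ℝ :=
  ((1 + t) ^ p - 1 - t ^ p) * t ^ (-(p / 2))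

lemma hasDerivAt_superadditivityRatio (p : ℝ) {u : ℝ} (hu : 0 < u) :
    HasDerivAt (superadditivityRatio p)
      (p / 2 * u ^ (-(p / 2) - 1) * ((u - 1) * (1 + u) ^ (p - 1) + (1 - u ^ p))) u := by
  have h1 : HasDerivAt (fun v : ℝ => (1 + v) ^ p) (1 * p * (1 + u) ^ (p - 1)) u :=
    ((hasDerivAt_id u).const_add 1).rpow_const (Or.inl (by simp; linarith))
  have h2 : HasDerivAt (fun v : ℝ => v ^ p) (p * u ^ (p - 1)) u :=
    hasDerivAt_rpow_const (Or.inl hu.ne')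
  have h3 : HasDerivAt (fun v : ℝ => v ^ (-(p / 2))) (-(p / 2) * u ^ (-(p / 2) - 1)) u :=
    hasDerivAt_rpow_const (Or.inl hu.ne')
  refine (((h1.sub_const 1).sub h2).mul h3).congr_deriv ?_
  have e1 : (1 + u) ^ p = (1 + u) ^ (p - 1) * (1 + u) := by
    rw [← rpow_add_one (by linarith), sub_add_cancel]
  have e2 : u ^ p = u ^ (p - 1) * u := by rw [← rpow_add_one hu.ne', sub_add_cancel]
  have e3 : u ^ (-(p / 2)) = u ^ (-(p / 2) - 1) * u := by
    rw [← rpow_add_one hu.ne', sub_add_cancel]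
  simp only [Pi.sub_apply]
  rw [e1, e2, e3]
  ring

lemma superadditivityRatio_le {p t : ℝ} (hp1 : 1 ≤ p) (hp2 : p ≤ 2) (ht : t ∈ Ioc 0 1) :
    superadditivityRatio p t ≤ 2 ^ p - 2 := by
  have hmono : MonotoneOn (superadditivityRatio p) (Ioc 0 1) := by
    refine monotoneOn_of_hasDerivWithinAt_nonneg (convex_Ioc 0 1)
      (f' := fun u => p / 2 * u ^ (-(p / 2) - 1) * ((u - 1) * (1 + u) ^ (p - 1) + (1 - u ^ p)))
      (fun u hu => (hasDerivAt_superadditivityRatio p hu.1).continuousAt.continuousWithinAt)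
      (fun u hu => ?_) (fun u hu => ?_) <;> rw [interior_Ioc] at hu
    · exact (hasDerivAt_superadditivityRatio p hu.1).hasDerivWithinAt
    · have hkey := one_sub_mul_one_add_rpow_sub_one_le hp1 hp2 hu.1.le hu.2.le
      have hpow : 0 < u ^ (-(p / 2) - 1) := rpow_pos_of_pos hu.1 _
      have hsign : 0 ≤ (u - 1) * (1 + u) ^ (p - 1) + (1 - u ^ p) := by linarith
      positivity
  calc superadditivityRatio p t ≤ superadditivityRatio p 1 :=
        hmono ht ⟨one_pos, le_rfl⟩ ht.2
    _ = 2 ^ p - 2 := by norm_num [superadditivityRatio]; ring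

lemma Real.one_add_rpow_le {p t : ℝ} (hp1 : 1 ≤ p) (hp2 : p ≤ 2) (ht : t ∈ Icc 0 1) :
    (1 + t) ^ p ≤ 1 + t ^ p + (2 ^ p - 2) * t ^ (p / 2) := by
  rcases ht.1.eq_or_lt with rfl | ht0
  · simp [zero_rpow (by linarith : p ≠ 0), zero_rpow (by linarith : p / 2 ≠ 0)]
  have hcancel : t ^ (-(p / 2)) * t ^ (p / 2) = 1 := by rw [← rpow_add ht0]; simp
  calc (1 + t) ^ p = 1 + t ^ p + superadditivityRatio p t * t ^ (p / 2) := by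
        rw [superadditivityRatio, mul_assoc, hcancel]; ring
    _ ≤ 1 + t ^ p + (2 ^ p - 2) * t ^ (p / 2) := by
        gcongr; exact superadditivityRatio_le hp1 hp2 ⟨ht0, ht.2⟩

lemma Real.add_rpow_le_add_rpow_add_mul_rpow {p a b : ℝ} (hp1 : 1 ≤ p) (hp2 : p ≤ 2) (ha : 0 ≤ a)
    (hb : 0 ≤ b) : (a + b) ^ p ≤ a ^ p + b ^ p + (2 ^ p - 2) * (a * b) ^ (p / 2) := by
  wlog hab : a ≤ b generalizing a b
  · have := this hb ha (le_of_not_ge hab)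
    rwa [add_comm b, mul_comm b, add_comm (b ^ p)] at this
  rcases hb.eq_or_lt with rfl | hb_pos
  · obtain rfl : a = 0 := le_antisymm hab ha
    simp [zero_rpow (by linarith : p ≠ 0), zero_rpow (by linarith : p / 2 ≠ 0)]
  obtain ⟨t, ht, rfl⟩ : ∃ t ∈ Icc (0 : ℝ) 1, a = t * b :=
    ⟨a / b, ⟨div_nonneg ha hb_pos.le, div_le_one_of_le₀ hab hb_pos.le⟩,
      (div_mul_cancel₀ a hb_pos.ne').symm⟩
  have hsq : (b * b) ^ (p / 2) = b ^ p := by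
    rw [← sq, ← rpow_natCast_mul hb_pos.le]; ring_nf
  calc (t * b + b) ^ p = (1 + t) ^ p * b ^ p := by
        rw [← mul_rpow (by linarith [ht.1]) hb_pos.le]; ring_nf
    _ ≤ (1 + t ^ p + (2 ^ p - 2) * t ^ (p / 2)) * b ^ p := by
        gcongr; exact one_add_rpow_le hp1 hp2 ht
    _ = (t * b) ^ p + b ^ p + (2 ^ p - 2) * (t * b * b) ^ (p / 2) := by
        rw [mul_rpow ht.1 hb_pos.le, mul_assoc, mul_rpow ht.1 (by positivity), hsq]; ring

lemma ENNReal.add_rpow_le_add_rpow_add_mul_rpow {p : ℝ} (hp1 : 1 ≤ p) (hp2 : p ≤ 2) (a b : ℝ≥0∞) :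
    (a + b) ^ p ≤ a ^ p + b ^ p + ENNReal.ofReal (2 ^ p - 2) * (a * b) ^ (p / 2) := by
  have hp0 : 0 < p := by linarith
  rcases eq_or_ne a ⊤ with rfl | ha
  · simp [ENNReal.top_rpow_of_pos hp0]
  rcases eq_or_ne b ⊤ with rfl | hb
  · simp [ENNReal.top_rpow_of_pos hp0]
  lift a to NNReal using ha
  lift b to NNReal using hb
  have hc : (0 : ℝ) ≤ 2 ^ p - 2 := by
    linarith [Real.rpow_le_rpow_of_exponent_le (one_le_two : (1 : ℝ) ≤ 2) hp1,
      Real.rpow_one (2 : ℝ)]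
  rw [ENNReal.ofReal, ← ENNReal.coe_add, ← ENNReal.coe_mul, ← ENNReal.coe_rpow_of_nonneg _ hp0.le,
    ← ENNReal.coe_rpow_of_nonneg _ hp0.le, ← ENNReal.coe_rpow_of_nonneg _ hp0.le,
    ← ENNReal.coe_rpow_of_nonneg _ (by positivity)]
  norm_cast
  rw [← NNReal.coe_le_coe]
  push_cast
  rw [Real.coe_toNNReal _ hc]
  exact Real.add_rpow_le_add_rpow_add_mul_rpow hp1 hp2 a.2 b.2

lemma ENNReal.sum_range_rpow_le {p : ℝ} (hp1 : 1 ≤ p) (hp2 : p ≤ 2) (a : ℕ → ℝ≥0∞) (n : ℕ) :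
    (∑ j ∈ Finset.range n, a j) ^ p ≤ ∑ j ∈ Finset.range n, a j ^ p +
      ENNReal.ofReal (2 ^ p - 2) *
        ∑ j ∈ Finset.range n, ∑ i ∈ Finset.range j, (a i * a j) ^ (p / 2) := by
  induction n with
  | zero => simp [ENNReal.zero_rpow_of_pos (by linarith : 0 < p)]
  | succ n ih =>
    have hcross : ((∑ i ∈ Finset.range n, a i) * a n) ^ (p / 2) ≤
        ∑ i ∈ Finset.range n, (a i * a n) ^ (p / 2) := by
      rw [Finset.sum_mul]
      exact Finset.le_sum_of_subadditive (· ^ (p / 2))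
        (by simp [ENNReal.zero_rpow_of_pos (by linarith : 0 < p / 2)])
        (fun x y => ENNReal.rpow_add_le_add_rpow x y (by linarith) (by linarith)) _ _
    rw [Finset.sum_range_succ, Finset.sum_range_succ, Finset.sum_range_succ]
    calc (∑ j ∈ Finset.range n, a j + a n) ^ p
        ≤ (∑ j ∈ Finset.range n, a j) ^ p + a n ^ p +
            ENNReal.ofReal (2 ^ p - 2) * ((∑ i ∈ Finset.range n, a i) * a n) ^ (p / 2) :=
          ENNReal.add_rpow_le_add_rpow_add_mul_rpow hp1 hp2 _ _
      _ ≤ (∑ j ∈ Finset.range n, a j ^ p + ENNReal.ofReal (2 ^ p - 2) *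
            ∑ j ∈ Finset.range n, ∑ i ∈ Finset.range j, (a i * a j) ^ (p / 2)) + a n ^ p +
            ENNReal.ofReal (2 ^ p - 2) * ∑ i ∈ Finset.range n, (a i * a n) ^ (p / 2) := by
          gcongr
      _ = _ := by rw [mul_add]; ring

lemma ENNReal.tsum_rpow_le {p : ℝ} (hp1 : 1 ≤ p) (hp2 : p ≤ 2) (a : ℕ → ℝ≥0∞) :
    (∑' j, a j) ^ p ≤ ∑' j, a j ^ p +
      ENNReal.ofReal (2 ^ p - 2) * ∑' j, ∑ i ∈ Finset.range j, (a i * a j) ^ (p / 2) := by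
  refine le_of_tendsto' ((ENNReal.continuous_rpow_const.tendsto _).comp
    (ENNReal.tendsto_nat_tsum a)) fun n => (ENNReal.sum_range_rpow_le hp1 hp2 a n).trans ?_
  gcongr <;> exact ENNReal.sum_le_tsum _

lemma ENNReal.tsum_tsum_ite_lt (g : ℕ → ℕ → ℝ≥0∞) :
    ∑' (i : ℕ) (j : ℕ), (if i < j then g i j else 0) = ∑' j, ∑ i ∈ Finset.range j, g i j := by
  rw [ENNReal.tsum_comm]
  refine tsum_congr fun j => ?_
  rw [sum_eq_tsum_indicator]
  refine tsum_congr fun i => ?_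
  simp [Set.indicator_apply]

theorem statement11_general
    {X : Type*} [MeasurableSpace X] (μ : Measure X) (p : ℝ)
    (hp : p ∈ Set.Icc (1 : ℝ) 2)
    (f : ℕ → X → ℝ≥0∞) (hf : ∀ j, Measurable (f j)) :
    ∫⁻ x, (∑' j, f j x) ^ p ∂μ ≤
      (∑' j, ∫⁻ x, f j x ^ p ∂μ) +
        ENNReal.ofReal ((2 : ℝ) ^ p - 2) *
          ∑' (i : ℕ) (j : ℕ), if i < j then ∫⁻ x, (f i x * f j x) ^ (p / 2) ∂μ else 0 := by
  have hpow : ∀ j, Measurable fun x => f j x ^ p := fun j => (hf j).pow_const p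
  have hcross : ∀ i j, Measurable fun x => (f i x * f j x) ^ (p / 2) :=
    fun i j => ((hf i).mul (hf j)).pow_const _
  calc ∫⁻ x, (∑' j, f j x) ^ p ∂μ
      ≤ ∫⁻ x, (∑' j, f j x ^ p + ENNReal.ofReal (2 ^ p - 2) *
          ∑' j, ∑ i ∈ Finset.range j, (f i x * f j x) ^ (p / 2)) ∂μ :=
        lintegral_mono fun x => ENNReal.tsum_rpow_le hp.1 hp.2 (f · x)
    _ = (∑' j, ∫⁻ x, f j x ^ p ∂μ) + ENNReal.ofReal (2 ^ p - 2) *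
          ∑' j, ∑ i ∈ Finset.range j, ∫⁻ x, (f i x * f j x) ^ (p / 2) ∂μ := by
        rw [lintegral_add_left (.tsum hpow),
          lintegral_const_mul _
            (.tsum fun j => Finset.measurable_sum _ fun i _ => hcross i j),
          lintegral_tsum fun j => (hpow j).aemeasurable,
          lintegral_tsum fun j => (Finset.measurable_sum _ fun i _ => hcross i j).aemeasurable]
        simp_rw [lintegral_finsetSum _ fun i _ => hcross i _]
    _ = _ := by rw [ENNReal.tsum_tsum_ite_lt]

/-- Corollary 2 (upper bound), for `p ∈ [1,2]` and a sequence of nonnegative functions: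
`‖∑_j f_j‖_p^p ≤ ∑_j ‖f_j‖_p^p + (2^p - 2) ∑_{i<j} ‖f_i f_j‖_{p/2}^{p/2}`,
with both sides interpreted in `[0,∞]`. -/
theorem statement11
    {X : Type*} [MeasurableSpace X] (μ : Measure X) (p : ℝ)
    (hp : p ∈ Set.Icc (1 : ℝ) 2)
    (f : ℕ → X → ℝ≥0∞) (hf : ∀ j, Measurable (f j)) (hffin : ∀ j x, f j x ≠ ∞) :
    ∫⁻ x, (∑' j, f j x) ^ p ∂μ ≤
      (∑' j, ∫⁻ x, f j x ^ p ∂μ) +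
        ENNReal.ofReal ((2 : ℝ) ^ p - 2) *
          ∑' (i : ℕ) (j : ℕ), if i < j then ∫⁻ x, (f i x * f j x) ^ (p / 2) ∂μ else 0 :=
  statement11_general μ p hp f hf
end

section
/- Let p > 0 and let Ω := {(x,y,z) ∈ ℝ³ : x ≥ 0, y ≥ 0, 0 ≤ z ≤ √(xy)}. Let H : Ω → ℝ be continuous, concave on Ω, and positively one-homogeneous (H(λu) = λH(u) for λ ≥ 0, u ∈ Ω), and suppose H(x, y, √(xy)) = (x^{1/p} + y^{1/p})^p for all x, y > 0 and H(x, y, 0) = x + y for all x, y ≥ 0. Then for any measure space (X, 𝒜, μ) and any measurable f, g : X → [0,∞) with ∫ f^p dμ < ∞ and ∫ g^p dμ < ∞, one has ∫ (f+g)^p dμ ≤ H( ∫ f^p dμ, ∫ g^p dμ, ∫ (fg)^{p/2} dμ ). -/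
/-!
Pointwise, the triple `u = (f^p, g^p, (fg)^(p/2))` lies in `Ω`, and the two boundary conditions
give `H ∘ u = (f + g)^p`: on the edge `z = √(xy)` where `f, g > 0`, on the face `z = 0`
elsewhere. The claim is then Jensen's inequality `∫ H ∘ u ≤ H (∫ u)`, which homogeneity makes
valid for an arbitrary measure: against the finite measure `‖u‖ • μ` the function `u / ‖u‖`
takes values in the compact set `Ω ∩ closedBall 0 1`, on which `H` is bounded.
-/

open MeasureTheory Real Set
open scoped ENNReal

lemma ContinuousOn.measurable_comp {X E F : Type*} [MeasurableSpace X] [TopologicalSpace E]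
    [MeasurableSpace E] [OpensMeasurableSpace E] [TopologicalSpace F] [MeasurableSpace F]
    [BorelSpace F] {H : E → F} {K : Set E} (hc : ContinuousOn H K) {u : X → E}
    (hum : Measurable u) (huK : ∀ x, u x ∈ K) : Measurable fun x => H (u x) :=
  hc.domRestrict.measurable.comp (hum.subtype_mk (h := huK))

section HomogeneousJensen

variable {X E : Type*} [MeasurableSpace X] [NormedAddCommGroup E] [NormedSpace ℝ E]
  {K : Set E} {H : E → ℝ}

lemma map_zero_of_homogeneous (hK₀ : (0 : E) ∈ K)
    (hhom : ∀ c : ℝ, 0 ≤ c → ∀ u ∈ K, H (c • u) = c * H u) : H 0 = 0 := by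
  simpa using hhom 0 le_rfl 0 hK₀

lemma exists_abs_le_mul_norm_of_homogeneous [ProperSpace E] (hc : ContinuousOn H K)
    (hK : IsClosed K) (hcone : ∀ c : ℝ, 0 ≤ c → ∀ u ∈ K, c • u ∈ K)
    (hhom : ∀ c : ℝ, 0 ≤ c → ∀ u ∈ K, H (c • u) = c * H u) :
    ∃ C, ∀ u ∈ K, |H u| ≤ C * ‖u‖ := by
  obtain ⟨C, hC⟩ := ((isCompact_closedBall (0 : E) 1).inter_left hK).exists_bound_of_continuousOn
      (hc.mono inter_subset_left)
  refine ⟨C, fun u hu => ?_⟩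
  rcases eq_or_ne u 0 with rfl | hu0
  · simp [map_zero_of_homogeneous hu hhom]
  have hv : ‖u‖⁻¹ • u ∈ K ∩ Metric.closedBall 0 1 :=
    ⟨hcone _ (by positivity) u hu,
      mem_closedBall_zero_iff.2 (norm_smul_inv_norm (𝕜 := ℝ) hu0).le⟩
  calc |H u| = |H (‖u‖ • ‖u‖⁻¹ • u)| := by
        rw [smul_inv_smul₀ (norm_ne_zero_iff.2 hu0)]
    _ = ‖u‖ * ‖H (‖u‖⁻¹ • u)‖ := by
      rw [hhom _ (norm_nonneg u) _ hv.1, abs_mul, abs_norm, Real.norm_eq_abs]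
    _ ≤ ‖u‖ * C := by gcongr; exact hC _ hv
    _ = C * ‖u‖ := mul_comm _ _

lemma integrable_comp_of_homogeneous [ProperSpace E] [MeasurableSpace E] [BorelSpace E]
    {μ : Measure X} (hc : ContinuousOn H K) (hK : IsClosed K)
    (hcone : ∀ c : ℝ, 0 ≤ c → ∀ u ∈ K, c • u ∈ K)
    (hhom : ∀ c : ℝ, 0 ≤ c → ∀ u ∈ K, H (c • u) = c * H u)
    {u : X → E} (hum : Measurable u) (huK : ∀ x, u x ∈ K) (hu : Integrable u μ) :
    Integrable (fun x => H (u x)) μ := by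
  obtain ⟨C, hC⟩ := exists_abs_le_mul_norm_of_homogeneous hc hK hcone hhom
  exact (hu.norm.const_mul C).mono' (hc.measurable_comp hum huK).aestronglyMeasurable
    (ae_of_all _ fun x => hC _ (huK x))

theorem ConcaveOn.integral_le_map_integral_of_homogeneous_of_isFiniteMeasure
    [CompleteSpace E] {ν : Measure X} [IsFiniteMeasure ν] (hconc : ConcaveOn ℝ K H)
    (hc : ContinuousOn H K) (hK : IsClosed K) (hK₀ : (0 : E) ∈ K)
    (hhom : ∀ c : ℝ, 0 ≤ c → ∀ u ∈ K, H (c • u) = c * H u)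
    {v : X → E} (hvK : ∀ᵐ x ∂ν, v x ∈ K) (hv : Integrable v ν)
    (hHv : Integrable (fun x => H (v x)) ν) :
    ∫ x, H (v x) ∂ν ≤ H (∫ x, v x ∂ν) := by
  rcases eq_zero_or_neZero ν with rfl | _
  · simp [map_zero_of_homogeneous hK₀ hhom]
  calc ∫ x, H (v x) ∂ν = ν.real univ * ⨍ x, H (v x) ∂ν := (measure_smul_average ν _).symm
    _ ≤ ν.real univ * H (⨍ x, v x ∂ν) := by
      gcongr
      exact hconc.le_map_average hc hK hvK hv hHv
    _ = H (∫ x, v x ∂ν) := by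
      rw [← hhom _ measureReal_nonneg _ (hconc.1.average_mem hK hvK hv), measure_smul_average]

theorem ConcaveOn.integral_le_map_integral_of_homogeneous [ProperSpace E] [MeasurableSpace E]
    [BorelSpace E] {μ : Measure X} (hconc : ConcaveOn ℝ K H) (hc : ContinuousOn H K)
    (hK : IsClosed K) (hK₀ : (0 : E) ∈ K) (hcone : ∀ c : ℝ, 0 ≤ c → ∀ u ∈ K, c • u ∈ K)
    (hhom : ∀ c : ℝ, 0 ≤ c → ∀ u ∈ K, H (c • u) = c * H u)
    {u : X → E} (hum : Measurable u) (huK : ∀ x, u x ∈ K) (hu : Integrable u μ) :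
    ∫ x, H (u x) ∂μ ≤ H (∫ x, u x ∂μ) := by
  set ν := μ.withDensity fun x => (‖u x‖₊ : ℝ≥0∞)
  have : IsFiniteMeasure ν := isFiniteMeasure_withDensity hu.2.ne
  set v : X → E := fun x => ‖u x‖⁻¹ • u x
  have hvK : ∀ x, v x ∈ K := fun x => hcone _ (by positivity) _ (huK x)
  have hvm : Measurable v := hum.norm.inv.smul hum
  have hv_le : ∀ x, ‖v x‖ ≤ 1 := fun x => by
    rcases eq_or_ne (u x) 0 with h | h
    · simp [v, h]
    · exact (norm_smul_inv_norm h).le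
  have hvi : Integrable v ν := .of_bound hvm.aestronglyMeasurable 1 (ae_of_all _ hv_le)
  have hHvi := integrable_comp_of_homogeneous hc hK hcone hhom hvm hvK hvi
  have hsmul : ∀ x, ‖u x‖ • v x = u x := fun x => by
    rcases eq_or_ne (u x) 0 with h | h
    · simp [v, h]
    · exact smul_inv_smul₀ (norm_ne_zero_iff.2 h) _
  have key := hconc.integral_le_map_integral_of_homogeneous_of_isFiniteMeasure hc hK hK₀ hhom
    (ae_of_all _ hvK) hvi hHvi
  have hw : AEMeasurable (fun x => ‖u x‖₊) μ := hum.nnnorm.aemeasurable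
  rw [integral_withDensity_eq_integral_smul₀ hw, integral_withDensity_eq_integral_smul₀ hw]
    at key
  simpa only [NNReal.smul_def, coe_nnnorm, smul_eq_mul, ← hhom _ (norm_nonneg _) _ (hvK _),
    hsmul] using key

end HomogeneousJensen

def sqrtCone : Set (ℝ × ℝ × ℝ) :=
  {u | 0 ≤ u.1 ∧ 0 ≤ u.2.1 ∧ 0 ≤ u.2.2 ∧ u.2.2 ≤ √(u.1 * u.2.1)}

lemma isClosed_sqrtCone : IsClosed sqrtCone :=
  (isClosed_le continuous_const continuous_fst).inter
    ((isClosed_le continuous_const (continuous_fst.comp continuous_snd)).inter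
      ((isClosed_le continuous_const (continuous_snd.comp continuous_snd)).inter
        (isClosed_le (continuous_snd.comp continuous_snd)
          ((continuous_fst.mul (continuous_fst.comp continuous_snd)).sqrt))))

lemma zero_mem_sqrtCone : (0 : ℝ × ℝ × ℝ) ∈ sqrtCone := by
  simp [sqrtCone]

lemma smul_mem_sqrtCone {c : ℝ} (hc : 0 ≤ c) {u : ℝ × ℝ × ℝ} (hu : u ∈ sqrtCone) :
    c • u ∈ sqrtCone := by
  obtain ⟨h1, h2, h3, h4⟩ := hu
  refine ⟨mul_nonneg hc h1, mul_nonneg hc h2, mul_nonneg hc h3, ?_⟩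
  calc c * u.2.2 ≤ c * √(u.1 * u.2.1) := by gcongr
    _ = √((c * u.1) * (c * u.2.1)) := by
      rw [show (c * u.1) * (c * u.2.1) = c ^ 2 * (u.1 * u.2.1) by ring,
        Real.sqrt_mul (sq_nonneg c), Real.sqrt_sq hc]

noncomputable def powerTriple (p a b : ℝ) : ℝ × ℝ × ℝ := (a ^ p, b ^ p, (a * b) ^ (p / 2))

lemma mul_rpow_half_eq_sqrt {a b : ℝ} (ha : 0 ≤ a) (hb : 0 ≤ b) (p : ℝ) :
    (a * b) ^ (p / 2) = √(a ^ p * b ^ p) := by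
  rw [← Real.mul_rpow ha hb, Real.sqrt_eq_rpow, ← Real.rpow_mul (mul_nonneg ha hb)]
  ring_nf

lemma powerTriple_mem_sqrtCone (p : ℝ) {a b : ℝ} (ha : 0 ≤ a) (hb : 0 ≤ b) :
    powerTriple p a b ∈ sqrtCone := by
  refine ⟨?_, ?_, ?_, (mul_rpow_half_eq_sqrt ha hb p).le⟩ <;> simp only [powerTriple] <;> positivity

lemma map_powerTriple {p : ℝ} (hp : 0 < p) {H : ℝ × ℝ × ℝ → ℝ}
    (Hbdry1 : ∀ x y : ℝ, 0 < x → 0 < y →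
      H (x, y, √(x * y)) = (x ^ (1 / p) + y ^ (1 / p)) ^ p)
    (Hbdry2 : ∀ x y : ℝ, 0 ≤ x → 0 ≤ y → H (x, y, 0) = x + y)
    {a b : ℝ} (ha : 0 ≤ a) (hb : 0 ≤ b) :
    H (powerTriple p a b) = (a + b) ^ p := by
  have hp2 : p / 2 ≠ 0 := by positivity
  rcases ha.eq_or_lt with rfl | ha
  · simpa [powerTriple, Real.zero_rpow hp.ne', Real.zero_rpow hp2] using
      Hbdry2 0 (b ^ p) le_rfl (by positivity)
  rcases hb.eq_or_lt with rfl | hb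
  · simpa [powerTriple, Real.zero_rpow hp.ne', Real.zero_rpow hp2] using
      Hbdry2 (a ^ p) 0 (by positivity) le_rfl
  rw [powerTriple, mul_rpow_half_eq_sqrt ha.le hb.le,
    Hbdry1 _ _ (by positivity) (by positivity), ← Real.rpow_mul ha.le, ← Real.rpow_mul hb.le,
    mul_one_div_cancel hp.ne', Real.rpow_one, Real.rpow_one]

section ENNRealPowers

variable {X : Type*} [MeasurableSpace X] {μ : Measure X} {f g : X → ℝ≥0∞} {p : ℝ}

lemma ENNReal.mul_rpow_half_le_add_rpow (a b : ℝ≥0∞) (hp : 0 ≤ p) :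
    (a * b) ^ (p / 2) ≤ a ^ p + b ^ p := by
  wlog hab : a ≤ b generalizing a b
  · rw [mul_comm, add_comm]
    exact this b a (le_of_not_ge hab)
  calc (a * b) ^ (p / 2) ≤ (b ^ (2 : ℝ)) ^ (p / 2) := by
        rw [ENNReal.rpow_two, sq]; gcongr
    _ = b ^ p := by rw [← ENNReal.rpow_mul]; ring_nf
    _ ≤ a ^ p + b ^ p := le_add_self

lemma lintegral_mul_rpow_half_ne_top (hf : AEMeasurable f μ) (hp : 0 ≤ p)
    (hfp : ∫⁻ x, f x ^ p ∂μ ≠ ∞) (hgp : ∫⁻ x, g x ^ p ∂μ ≠ ∞) :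
    ∫⁻ x, (f x * g x) ^ (p / 2) ∂μ ≠ ∞ := by
  refine ne_top_of_le_ne_top ?_
    (lintegral_mono fun x => ENNReal.mul_rpow_half_le_add_rpow (f x) (g x) hp)
  rw [lintegral_add_left' (hf.pow_const p)]
  exact ENNReal.add_ne_top.2 ⟨hfp, hgp⟩

lemma integrable_toReal_rpow (hf : AEMeasurable f μ) (hfp : ∫⁻ x, f x ^ p ∂μ ≠ ∞) :
    Integrable (fun x => (f x).toReal ^ p) μ := by
  simpa only [ENNReal.toReal_rpow] using
    integrable_toReal_of_lintegral_ne_top (hf.pow_const p) hfp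

lemma integral_toReal_rpow (hf : AEMeasurable f μ) (hfp : ∫⁻ x, f x ^ p ∂μ ≠ ∞) :
    ∫ x, (f x).toReal ^ p ∂μ = (∫⁻ x, f x ^ p ∂μ).toReal := by
  simpa only [ENNReal.toReal_rpow] using
    integral_toReal (hf.pow_const p) (ae_lt_top' (hf.pow_const p) hfp)

lemma integrable_powerTriple_toReal (hf : AEMeasurable f μ) (hg : AEMeasurable g μ)
    (hfp : ∫⁻ x, f x ^ p ∂μ ≠ ∞) (hgp : ∫⁻ x, g x ^ p ∂μ ≠ ∞)
    (hfgp : ∫⁻ x, (f x * g x) ^ (p / 2) ∂μ ≠ ∞) :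
    Integrable (fun x => powerTriple p (f x).toReal (g x).toReal) μ := by
  have hfg := integrable_toReal_rpow (hf.mul hg) hfgp
  simp only [Pi.mul_apply, ENNReal.toReal_mul] at hfg
  exact (integrable_toReal_rpow hf hfp).prodMk ((integrable_toReal_rpow hg hgp).prodMk hfg)

lemma integral_powerTriple_toReal (hf : AEMeasurable f μ) (hg : AEMeasurable g μ)
    (hfp : ∫⁻ x, f x ^ p ∂μ ≠ ∞) (hgp : ∫⁻ x, g x ^ p ∂μ ≠ ∞)
    (hfgp : ∫⁻ x, (f x * g x) ^ (p / 2) ∂μ ≠ ∞) :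
    ∫ x, powerTriple p (f x).toReal (g x).toReal ∂μ =
      ((∫⁻ x, f x ^ p ∂μ).toReal, (∫⁻ x, g x ^ p ∂μ).toReal,
        (∫⁻ x, (f x * g x) ^ (p / 2) ∂μ).toReal) := by
  have hfg := integrable_toReal_rpow (hf.mul hg) hfgp
  have hfg' := integral_toReal_rpow (hf.mul hg) hfgp
  simp only [Pi.mul_apply, ENNReal.toReal_mul] at hfg hfg'
  simp only [powerTriple]
  rw [integral_pair (integrable_toReal_rpow hf hfp) ((integrable_toReal_rpow hg hgp).prodMk hfg),
    integral_pair (integrable_toReal_rpow hg hgp) hfg,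
    integral_toReal_rpow hf hfp, integral_toReal_rpow hg hgp, hfg']

end ENNRealPowers

/-- Lemma (GeneralConcavity), concave case, for `p > 0`: if `H` is continuous, concave and
positively one-homogeneous on the cone `Ω = {x,y ≥ 0, 0 ≤ z ≤ √(xy)}`, with boundary values
`H(x,y,√(xy)) = (x^{1/p}+y^{1/p})^p` and `H(x,y,0) = x + y`, then
`‖f+g‖_p^p ≤ H(‖f‖_p^p, ‖g‖_p^p, ‖fg‖_{p/2}^{p/2})`. -/
theorem statement14
    {X : Type*} [MeasurableSpace X] (μ : Measure X) (p : ℝ) (hp : 0 < p)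
    (Ω : Set (ℝ × ℝ × ℝ))
    (hΩ : Ω = {u : ℝ × ℝ × ℝ |
      0 ≤ u.1 ∧ 0 ≤ u.2.1 ∧ 0 ≤ u.2.2 ∧ u.2.2 ≤ Real.sqrt (u.1 * u.2.1)})
    (H : ℝ × ℝ × ℝ → ℝ)
    (Hcont : ContinuousOn H Ω)
    (Hconc : ConcaveOn ℝ Ω H)
    (Hhom : ∀ c : ℝ, 0 ≤ c → ∀ u ∈ Ω, H (c • u) = c * H u)
    (Hbdry1 : ∀ x y : ℝ, 0 < x → 0 < y →
      H (x, y, Real.sqrt (x * y)) = (x ^ (1 / p) + y ^ (1 / p)) ^ p)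
    (Hbdry2 : ∀ x y : ℝ, 0 ≤ x → 0 ≤ y → H (x, y, 0) = x + y)
    (f g : X → ℝ≥0∞) (hf : Measurable f) (hg : Measurable g)
    (hffin : ∀ x, f x ≠ ∞) (hgfin : ∀ x, g x ≠ ∞)
    (hfp : ∫⁻ x, f x ^ p ∂μ ≠ ∞) (hgp : ∫⁻ x, g x ^ p ∂μ ≠ ∞) :
    ∫⁻ x, (f x + g x) ^ p ∂μ ≤
      ENNReal.ofReal (H ((∫⁻ x, f x ^ p ∂μ).toReal, (∫⁻ x, g x ^ p ∂μ).toReal,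
        (∫⁻ x, (f x * g x) ^ (p / 2) ∂μ).toReal)) := by
  obtain rfl : Ω = sqrtCone := hΩ
  have hcone : ∀ c : ℝ, 0 ≤ c → ∀ u ∈ sqrtCone, c • u ∈ sqrtCone := fun c hc u hu =>
    smul_mem_sqrtCone hc hu
  set u : X → ℝ × ℝ × ℝ := fun x => powerTriple p (f x).toReal (g x).toReal
  have huΩ : ∀ x, u x ∈ sqrtCone := fun x =>
    powerTriple_mem_sqrtCone p ENNReal.toReal_nonneg ENNReal.toReal_nonneg
  have hum : Measurable u := by unfold u powerTriple; fun_prop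
  have hfgp := lintegral_mul_rpow_half_ne_top hf.aemeasurable hp.le hfp hgp
  have hui := integrable_powerTriple_toReal hf.aemeasurable hg.aemeasurable hfp hgp hfgp
  have hHu : ∀ x, H (u x) = ((f x + g x) ^ p).toReal := fun x => by
    rw [map_powerTriple hp Hbdry1 Hbdry2 ENNReal.toReal_nonneg ENNReal.toReal_nonneg,
      ← ENNReal.toReal_add (hffin x) (hgfin x), ENNReal.toReal_rpow]
  have hHi := integrable_comp_of_homogeneous Hcont isClosed_sqrtCone hcone Hhom hum huΩ hui
  calc ∫⁻ x, (f x + g x) ^ p ∂μ = ENNReal.ofReal (∫ x, H (u x) ∂μ) := by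
        rw [ofReal_integral_eq_lintegral_ofReal hHi (ae_of_all _ fun x => by simp [hHu])]
        refine lintegral_congr fun x => ?_
        rw [hHu, ENNReal.ofReal_toReal
          (ENNReal.rpow_ne_top_of_nonneg hp.le (ENNReal.add_ne_top.2 ⟨hffin x, hgfin x⟩))]
    _ ≤ ENNReal.ofReal (H (∫ x, u x ∂μ)) := ENNReal.ofReal_le_ofReal <|
        Hconc.integral_le_map_integral_of_homogeneous Hcont isClosed_sqrtCone zero_mem_sqrtCone
          hcone Hhom hum huΩ hui
    _ = _ := by
      rw [integral_powerTriple_toReal hf.aemeasurable hg.aemeasurable hfp hgp hfgp]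
end
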